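/- arXiv:2002.02550 — 11 statements merged into one kernel-verified Lean document; each statement's English description precedes it below -/
import Mathlib

section
/- Let q, M, j, y be positive integers with M, j in [1,q] and y in [j,q]. Then the number of integers a with 0 ≤ a ≤ M-1 satisfying y - j ≤ (a*j mod q) < y equals ⌊M*j/q⌋ + (1 if y ≤ (M*j mod q), else 0). -/
theorem aux_count (q j y : ℕ) (hq : 1 ≤ q) (hj2 : j ≤ q)
    (hy1 : j ≤ y) (hy2 : y ≤ q) (hj1 : 1 ≤ j) : ∀ M : ℕ,
    ((Finset.range M).filter (fun a => y - j ≤ (a * j) % q ∧ (a * j) % q < y)).card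
      = M * j / q + (if y ≤ (M * j) % q then 1 else 0) := by
  intro M
  induction M with
  | zero =>
    simp only [Finset.range_zero, Finset.filter_empty, Finset.card_empty, Nat.zero_mul,
      Nat.zero_div, Nat.zero_mod]
    rw [if_neg (by omega)]
  | succ M ih =>
    have hr : M * j % q < q := Nat.mod_lt _ hq
    have e1 : (M + 1) * j = q * (M * j / q) + (M * j % q + j) := by
      conv_lhs => rw [add_mul, one_mul, ← Nat.div_add_mod (M * j) q]
      ring
    have ediv : (M + 1) * j / q = M * j / q + (M * j % q + j) / q := by
      rw [e1, Nat.mul_add_div hq]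
    have emod : (M + 1) * j % q = (M * j % q + j) % q := by
      rw [e1, Nat.mul_add_mod]
    rw [Finset.range_add_one, Finset.filter_insert]
    by_cases hP : y - j ≤ M * j % q ∧ M * j % q < y
    · rw [if_pos hP, Finset.card_insert_of_notMem (by simp), ih]
      by_cases hc : M * j % q + j < q
      · have hd : (M * j % q + j) / q = 0 := Nat.div_eq_of_lt hc
        have hm : (M * j % q + j) % q = M * j % q + j := Nat.mod_eq_of_lt hc
        rw [ediv, emod, hd, hm]
        split_ifs <;> omega
      · push_neg at hc
        have hd : (M * j % q + j) / q = 1 := by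
          apply Nat.div_eq_of_lt_le <;> omega
        have hm : (M * j % q + j) % q = M * j % q + j - q := by
          rw [Nat.mod_eq_sub_mod hc, Nat.mod_eq_of_lt (by omega)]
        rw [ediv, emod, hd, hm]
        split_ifs <;> omega
    · rw [if_neg hP, ih]
      by_cases hc : M * j % q + j < q
      · have hd : (M * j % q + j) / q = 0 := Nat.div_eq_of_lt hc
        have hm : (M * j % q + j) % q = M * j % q + j := Nat.mod_eq_of_lt hc
        rw [ediv, emod, hd, hm]
        split_ifs <;> omega
      · push_neg at hc
        have hd : (M * j % q + j) / q = 1 := by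
          apply Nat.div_eq_of_lt_le <;> omega
        have hm : (M * j % q + j) % q = M * j % q + j - q := by
          rw [Nat.mod_eq_sub_mod hc, Nat.mod_eq_of_lt (by omega)]
        rw [ediv, emod, hd, hm]
        split_ifs <;> omega

theorem stmt_0 (q M j y : ℕ) (hq : 1 ≤ q) (hM : 1 ≤ M ∧ M ≤ q)
    (hj : 1 ≤ j ∧ j ≤ q) (hy : j ≤ y ∧ y ≤ q) :
    ((Finset.range M).filter (fun a => y - j ≤ (a * j) % q ∧ (a * j) % q < y)).card
      = M * j / q + (if y ≤ (M * j) % q then 1 else 0) := by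
  exact aux_count q j y hq hj.2 hy.1 hy.2 hj.1 M
end

section
/- Let q, M, j, y be positive integers with M, j in [1,q] and y in [1,j]. Then the number of integers a with 0 ≤ a ≤ M-1 satisfying y ≤ (a*j mod q) < y + q - j equals M - ⌊M*j/q⌋ - (1 if y ≤ (M*j mod q), else 0). -/
private lemma key_aux (q j y : ℕ) (hq : 1 ≤ q) (hj2 : j ≤ q)
    (hy1 : 1 ≤ y) (hy2 : y ≤ j) :
    ∀ M : ℕ,
      (((Finset.range M).filter
        (fun a => y ≤ (a * j) % q ∧ (a * j) % q < y + q - j)).card : ℤ)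
        = (M : ℤ) - (M * j / q : ℕ) - (if y ≤ (M * j) % q then 1 else 0) := by
  intro M
  induction M with
  | zero =>
      simp
      omega
  | succ M ih =>
      have hr1 : M * j % q < q := Nat.mod_lt _ hq
      have hd1 : q * (M * j / q) + M * j % q = M * j := Nat.div_add_mod _ _
      have e : (M + 1) * j = q * (M * j / q) + (M * j % q + j) := by
        rw [add_mul, one_mul]; omega
      have ediv : (M + 1) * j / q = M * j / q + (M * j % q + j) / q := by
        rw [e, Nat.mul_add_div hq]
      have emod : (M + 1) * j % q = (M * j % q + j) % q := by
        rw [e, Nat.mul_add_mod]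
      -- unfold the filtered card over range (M+1)
      have hsplit : (Finset.range (M + 1)).filter
            (fun a => y ≤ (a * j) % q ∧ (a * j) % q < y + q - j)
          = if y ≤ (M * j) % q ∧ (M * j) % q < y + q - j then
              insert M ((Finset.range M).filter
                (fun a => y ≤ (a * j) % q ∧ (a * j) % q < y + q - j))
            else (Finset.range M).filter
                (fun a => y ≤ (a * j) % q ∧ (a * j) % q < y + q - j) := by
        rw [Finset.range_add_one, Finset.filter_insert]
      by_cases hc : q ≤ M * j % q + j
      · -- carry case
        have hm2 : (M * j % q + j) % q = M * j % q + j - q := by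
          rw [Nat.mod_eq_sub_mod hc, Nat.mod_eq_of_lt (by omega)]
        have hd2 : (M * j % q + j) / q = 1 := by
          have := Nat.div_add_mod (M * j % q + j) q
          have h1 : q * ((M * j % q + j) / q) = q * 1 := by omega
          exact Nat.eq_of_mul_eq_mul_left hq h1
        rw [hsplit]
        by_cases hP : y ≤ (M * j) % q ∧ (M * j) % q < y + q - j
        · rw [if_pos hP, Finset.card_insert_of_notMem (by simp), Nat.cast_add,
            Nat.cast_one, ih, ediv, emod, hm2, hd2]
          split_ifs <;> omega
        · rw [if_neg hP, ih, ediv, emod, hm2, hd2]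
          split_ifs <;> omega
      · -- no carry
        have hm2 : (M * j % q + j) % q = M * j % q + j := Nat.mod_eq_of_lt (by omega)
        have hd2 : (M * j % q + j) / q = 0 := Nat.div_eq_of_lt (by omega)
        rw [hsplit]
        by_cases hP : y ≤ (M * j) % q ∧ (M * j) % q < y + q - j
        · rw [if_pos hP, Finset.card_insert_of_notMem (by simp), Nat.cast_add,
            Nat.cast_one, ih, ediv, emod, hm2, hd2]
          split_ifs <;> omega
        · rw [if_neg hP, ih, ediv, emod, hm2, hd2]
          split_ifs <;> omega

theorem stmt_1 (q M j y : ℕ) (hq : 1 ≤ q) (hM : 1 ≤ M ∧ M ≤ q)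
    (hj : 1 ≤ j ∧ j ≤ q) (hy : 1 ≤ y ∧ y ≤ j) :
    ((Finset.range M).filter (fun a => y ≤ (a * j) % q ∧ (a * j) % q < y + q - j)).card
      = M - M * j / q - (if y ≤ (M * j) % q then 1 else 0) := by
  have h := key_aux q j y hq hj.2 hy.1 hy.2 M
  split_ifs at h ⊢ <;> omega
end

section
/- Let q, M, j be positive integers with M, j in [1,q]. Then the number of integers a with 0 ≤ a ≤ M-1 satisfying 0 ≤ (a*j mod q) < q - j equals M - ⌊M*j/q⌋. -/
theorem stmt_2 (q M j : ℕ) (hq : 1 ≤ q) (hM : 1 ≤ M ∧ M ≤ q)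
    (hj : 1 ≤ j ∧ j ≤ q) :
    ((Finset.range M).filter (fun a => (a * j) % q < q - j)).card
      = M - M * j / q := by
  obtain ⟨hM1, hMq⟩ := hM
  obtain ⟨hj1, hjq⟩ := hj
  have hq0 : 0 < q := hq
  have key : ∀ a : ℕ, (a+1)*j/q = a*j/q + (if (a*j)%q < q - j then 0 else 1) := by
    intro a
    have hmod := Nat.mod_lt (a*j) hq0
    have h1 : (a+1)*j = q*(a*j/q) + ((a*j)%q + j) := by
      have := Nat.div_add_mod (a*j) q
      ring_nf
      omega
    rw [h1, Nat.mul_add_div hq0]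
    congr 1
    split_ifs with h
    · exact Nat.div_eq_of_lt (by omega)
    · have h2 : (a*j)%q + j = ((a*j)%q + j - q) + q := by omega
      rw [h2, Nat.add_div_right _ hq0, Nat.div_eq_of_lt (by omega)]
  have hsum : ∀ n : ℕ,
      ((Finset.range n).filter (fun a => ¬ (a*j)%q < q - j)).card = n*j/q := by
    intro n
    induction n with
    | zero => simp
    | succ n ih =>
      rw [Finset.range_add_one, Finset.filter_insert, key n]
      by_cases h : n * j % q < q - j
      · rw [if_neg (by omega), ih, if_pos h]; ring
      · rw [if_pos (by omega),
          Finset.card_insert_of_notMem (by simp), ih, if_neg h]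
  have hcomp := Finset.card_filter_add_card_filter_not
    (s := Finset.range M) (p := fun a => (a*j)%q < q - j)
  rw [Finset.card_range, hsum M] at hcomp
  have hle : M*j/q ≤ M := by
    calc M*j/q ≤ M*q/q := Nat.div_le_div_right (Nat.mul_le_mul_left _ hjq)
    _ = M := Nat.mul_div_cancel _ hq0
  omega
end

section
/- Fix integers n and k ≥ 1, and define the directed graph G(n,k) on vertex set {0,1,...,k} with edges E(i): ((i+n-2) mod (k+1)) → ((i+n-1) mod k) for 1 ≤ i ≤ k. Every vertex other than k and ((n-2) mod (k+1)) has in-degree exactly 1 and out-degree exactly 1 in G(n,k). -/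
lemma stmt_5_helper (k a : ℕ) (m c v : ℤ) (hm : 0 < m) (hkm : (k : ℤ) ≤ m)
    (hv0 : 0 ≤ v) (hvm : v < m) (ha1 : 1 ≤ a) (ha2 : a ≤ k)
    (hd : m ∣ ((a : ℤ) + c - v)) :
    ((Finset.Icc 1 k).filter (fun i : ℕ => ((i : ℤ) + c) % m = v)).card = 1 := by
  have hv' : v % m = v := Int.emod_eq_of_lt hv0 hvm
  have key : ∀ i : ℕ, ((i : ℤ) + c) % m = v ↔ m ∣ ((i : ℤ) + c - v) := by
    intro i
    rw [show (((i : ℤ) + c) % m = v ↔ ((i : ℤ) + c) % m = v % m) from by rw [hv'],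
      Int.emod_eq_emod_iff_emod_sub_eq_zero, ← Int.dvd_iff_emod_eq_zero]
  rw [Finset.card_eq_one]
  refine ⟨a, ?_⟩
  ext i
  simp only [Finset.mem_filter, Finset.mem_Icc, Finset.mem_singleton, key]
  constructor
  · rintro ⟨⟨h1, h2⟩, hdi⟩
    have hdd : m ∣ ((i : ℤ) - a) := by
      have := dvd_sub hdi hd
      have e : ((i : ℤ) + c - v) - ((a : ℤ) + c - v) = (i : ℤ) - a := by ring
      rwa [e] at this
    have : ((i : ℤ) - a) = 0 := Int.eq_zero_of_abs_lt_dvd hdd (by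
      rw [abs_lt]; constructor <;> omega)
    omega
  · rintro rfl
    exact ⟨⟨ha1, ha2⟩, hd⟩

theorem stmt_5 (n : ℤ) (k : ℕ) (hk : 1 ≤ k) (v : ℤ)
    (hv0 : 0 ≤ v) (hvk : v ≤ (k : ℤ)) (hvne : v ≠ (k : ℤ))
    (hvne' : v ≠ (n - 2) % ((k : ℤ) + 1)) :
    ((Finset.Icc 1 k).filter (fun i : ℕ => ((i : ℤ) + n - 1) % (k : ℤ) = v)).card = 1 ∧
    ((Finset.Icc 1 k).filter (fun i : ℕ => ((i : ℤ) + n - 2) % ((k : ℤ) + 1) = v)).card = 1 := by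
  have hk' : (0 : ℤ) < (k : ℤ) := by exact_mod_cast hk
  have hvlt : v < (k : ℤ) := lt_of_le_of_ne hvk hvne
  constructor
  · -- modulus k
    set r := (v - n + 1) % (k : ℤ) with hr
    have hr0 : 0 ≤ r := Int.emod_nonneg _ (ne_of_gt hk')
    have hrk : r < (k : ℤ) := Int.emod_lt_of_pos _ hk'
    have hrd : (k : ℤ) ∣ (v - n + 1 - r) := Int.dvd_self_sub_of_emod_eq rfl
    set a : ℕ := if r = 0 then k else r.toNat with ha
    have ha1 : 1 ≤ a := by
      rcases eq_or_ne r 0 with h | h <;> simp [ha, h] <;> omega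
    have ha2 : a ≤ k := by
      rcases eq_or_ne r 0 with h | h <;> simp [ha, h] <;> omega
    have hdar : (k : ℤ) ∣ ((a : ℤ) - r) := by
      rcases eq_or_ne r 0 with h | h
      · simp [ha, h]
      · simp [ha, h, Int.toNat_of_nonneg hr0]
    have hd : (k : ℤ) ∣ ((a : ℤ) + (n - 1) - v) := by
      have : ((a : ℤ) + (n - 1) - v) = ((a : ℤ) - r) - (v - n + 1 - r) := by ring
      rw [this]
      exact dvd_sub hdar hrd
    have := stmt_5_helper k a (k : ℤ) (n - 1) v hk' le_rfl hv0 hvlt ha1 ha2 hd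
    simpa only [add_sub_assoc] using this
  · -- modulus k+1
    have hm : (0 : ℤ) < (k : ℤ) + 1 := by linarith
    set r := (v - n + 2) % ((k : ℤ) + 1) with hr
    have hr0 : 0 ≤ r := Int.emod_nonneg _ (ne_of_gt hm)
    have hrk : r < (k : ℤ) + 1 := Int.emod_lt_of_pos _ hm
    have hrd : ((k : ℤ) + 1) ∣ (v - n + 2 - r) := Int.dvd_self_sub_of_emod_eq rfl
    have hrne : r ≠ 0 := by
      intro h0
      apply hvne'
      have hdv : ((k : ℤ) + 1) ∣ (v - n + 2) := by
        have := hrd; rw [h0] at this; simpa using this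
      have : v % ((k : ℤ) + 1) = (n - 2) % ((k : ℤ) + 1) := by
        rw [Int.emod_eq_emod_iff_emod_sub_eq_zero, ← Int.dvd_iff_emod_eq_zero]
        have e : v - (n - 2) = v - n + 2 := by ring
        rw [e]; exact hdv
      rw [← this, Int.emod_eq_of_lt hv0 (by linarith)]
    set a : ℕ := r.toNat with ha
    have ha1 : 1 ≤ a := by simp [ha]; omega
    have ha2 : a ≤ k := by simp [ha]; omega
    have hd : ((k : ℤ) + 1) ∣ ((a : ℤ) + (n - 2) - v) := by
      have : ((a : ℤ) + (n - 2) - v) = ((a : ℤ) - r) - (v - n + 2 - r) := by ring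
      rw [this, ha, Int.toNat_of_nonneg hr0, sub_self, zero_sub]
      exact dvd_neg.mpr hrd
    have := stmt_5_helper k a ((k : ℤ) + 1) (n - 2) v hm (by linarith) hv0 (by linarith) ha1 ha2 hd
    simpa only [add_sub_assoc] using this
end

section
/- Fix integers n and k ≥ 1 and consider the graph G(n,k). If a → b is an edge of G(n,k) (so a = (i+n-2) mod (k+1) and b = (i+n-1) mod k for some i in [1,k]), then the edge length (b - a) mod (k+1) equals ((n mod k) - (n mod (k+1)) + 2) mod (k+1) if b ≤ (n mod k) - 1, and equals ((n mod k) - (n mod (k+1)) + 1) mod (k+1) if b ≥ (n mod k). -/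
theorem stmt_6 (n : ℤ) (k : ℕ) (hk : 1 ≤ k) (i a b : ℤ)
    (hi : 1 ≤ i ∧ i ≤ (k : ℤ))
    (ha : a = (i + n - 2) % ((k : ℤ) + 1)) (hb : b = (i + n - 1) % (k : ℤ)) :
    (b ≤ n % (k : ℤ) - 1 →
      (b - a) % ((k : ℤ) + 1) = (n % (k : ℤ) - n % ((k : ℤ) + 1) + 2) % ((k : ℤ) + 1)) ∧
    (n % (k : ℤ) ≤ b →
      (b - a) % ((k : ℤ) + 1) = (n % (k : ℤ) - n % ((k : ℤ) + 1) + 1) % ((k : ℤ) + 1)) := by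
  obtain ⟨hi1, hi2⟩ := hi
  have hK : (1:ℤ) ≤ (k:ℤ) := by exact_mod_cast hk
  set K : ℤ := (k:ℤ) with hKdef
  have hKpos : (0:ℤ) < K := by linarith
  have hK1 : (0:ℤ) < K + 1 := by linarith
  have h0r : 0 ≤ n % K := Int.emod_nonneg n (ne_of_gt hKpos)
  have hrK : n % K < K := Int.emod_lt_of_pos n hKpos
  have e1 : a = i + n - 2 - (i + n - 2) / (K + 1) * (K + 1) := by
    rw [ha, Int.emod_def]; ring
  have e2 : n % (K + 1) = n - n / (K + 1) * (K + 1) := by rw [Int.emod_def]; ring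
  have hsplit : i + n - 1 = (i - 1 + n % K) + (n / K) * K := by
    rw [Int.emod_def]; ring
  have hbmod : b = (i - 1 + n % K) % K := by
    rw [hb, hsplit, Int.add_mul_emod_self_right]
  by_cases hcase : i - 1 + n % K < K
  · -- b = i - 1 + n % K, so b ≥ n % K
    have beq : b = i - 1 + n % K := by
      rw [hbmod, Int.emod_eq_of_lt (by linarith) hcase]
    constructor
    · intro h; exfalso; linarith
    · intro _
      have : (K + 1) ∣ (n % K - n % (K + 1) + 1) - (b - a) :=
        ⟨n / (K + 1) - (i + n - 2) / (K + 1), by rw [beq, e1, e2]; ring⟩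
      exact (Int.modEq_iff_dvd.mpr this : (b - a) ≡ _ [ZMOD (K+1)])
  · -- b = i - 1 + n % K - K, so b ≤ n % K - 1
    push_neg at hcase
    have beq : b = i - 1 + n % K - K := by
      have h2 : (i - 1 + n % K) % K = (i - 1 + n % K - K) % K := by
        conv_lhs => rw [show i - 1 + n % K = (i - 1 + n % K - K) + 1 * K from by ring]
        rw [Int.add_mul_emod_self_right]
      rw [hbmod, h2, Int.emod_eq_of_lt (by linarith) (by linarith)]
    constructor
    · intro _
      have : (K + 1) ∣ (n % K - n % (K + 1) + 2) - (b - a) :=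
        ⟨1 + n / (K + 1) - (i + n - 2) / (K + 1), by rw [beq, e1, e2]; ring⟩
      exact (Int.modEq_iff_dvd.mpr this : (b - a) ≡ _ [ZMOD (K+1)])
    · intro h; exfalso; linarith
end

section
/- Define polynomials F_a(x) by F_0 = 1, F_1 = x, and F_{a+2}(x) = (x+1)F_{a+1}(x) - F_a(x). Then for all a ≥ 0 the derivatives at 0 satisfy: F'_{3a}(0) = (-1)^a * a, F'_{3a+1}(0) = (-1)^a * (2a+1), and F'_{3a+2}(0) = (-1)^a * (a+1). -/
open Polynomial

/-- The polynomial sequence `F_a` with `F_0 = 1`, `F_1 = x`,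
`F_{a+2} = (x+1) F_{a+1} - F_a`. -/
noncomputable def F : ℕ → Polynomial ℤ
  | 0 => 1
  | 1 => X
  | (a + 2) => (X + 1) * F (a + 1) - F a

lemma F_eval_rec (n : ℕ) : (F (n + 2)).eval 0 = (F (n + 1)).eval 0 - (F n).eval 0 := by
  simp [F]

lemma F_deriv_rec (n : ℕ) :
    (derivative (F (n + 2))).eval 0 =
      (F (n + 1)).eval 0 + (derivative (F (n + 1))).eval 0 - (derivative (F n)).eval 0 := by
  simp [F, derivative_mul]

lemma key (a : ℕ) :
    (F (3 * a)).eval 0 = (-1) ^ a ∧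
    (F (3 * a + 1)).eval 0 = 0 ∧
    (F (3 * a + 2)).eval 0 = -(-1) ^ a ∧
    (derivative (F (3 * a))).eval 0 = (-1) ^ a * (a : ℤ) ∧
    (derivative (F (3 * a + 1))).eval 0 = (-1) ^ a * (2 * (a : ℤ) + 1) ∧
    (derivative (F (3 * a + 2))).eval 0 = (-1) ^ a * ((a : ℤ) + 1) := by
  induction a with
  | zero => norm_num [F]
  | succ a ih =>
    obtain ⟨e0, e1, e2, d0, d1, d2⟩ := ih
    have h3 : 3 * (a + 1) = 3 * a + 3 := by ring
    have e3 : (F (3 * a + 3)).eval 0 = -(-1) ^ a := by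
      rw [show 3 * a + 3 = (3 * a + 1) + 2 from rfl, F_eval_rec, e2, e1]; ring
    have e4 : (F (3 * a + 4)).eval 0 = 0 := by
      rw [show 3 * a + 4 = (3 * a + 2) + 2 from rfl, F_eval_rec]
      rw [show 3 * a + 2 + 1 = 3 * a + 3 from rfl, e3, e2]; ring
    have e5 : (F (3 * a + 5)).eval 0 = (-1) ^ a := by
      rw [show 3 * a + 5 = (3 * a + 3) + 2 from rfl, F_eval_rec]
      rw [show 3 * a + 3 + 1 = 3 * a + 4 from rfl, e4, e3]; ring
    have d3 : (derivative (F (3 * a + 3))).eval 0 = (-1) ^ a * (-(a : ℤ) - 1) := by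
      rw [show 3 * a + 3 = (3 * a + 1) + 2 from rfl, F_deriv_rec]
      rw [show 3 * a + 1 + 1 = 3 * a + 2 from rfl, e2, d2, d1]; ring
    have d4 : (derivative (F (3 * a + 4))).eval 0 = (-1) ^ a * (-(2 * (a : ℤ)) - 3) := by
      rw [show 3 * a + 4 = (3 * a + 2) + 2 from rfl, F_deriv_rec]
      rw [show 3 * a + 2 + 1 = 3 * a + 3 from rfl, e3, d3, d2]; ring
    have d5 : (derivative (F (3 * a + 5))).eval 0 = (-1) ^ a * (-(a : ℤ) - 2) := by
      rw [show 3 * a + 5 = (3 * a + 3) + 2 from rfl, F_deriv_rec]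
      rw [show 3 * a + 3 + 1 = 3 * a + 4 from rfl, e4, d4, d3]; ring
    refine ⟨?_, ?_, ?_, ?_, ?_, ?_⟩ <;>
      simp only [h3, show 3 * a + 3 + 1 = 3 * a + 4 from rfl,
        show 3 * a + 3 + 2 = 3 * a + 5 from rfl, e3, e4, e5, d3, d4, d5, pow_succ] <;>
      push_cast <;> ring

theorem stmt_9 (a : ℕ) :
    (Polynomial.derivative (F (3 * a))).eval 0 = (-1) ^ a * (a : ℤ) ∧
    (Polynomial.derivative (F (3 * a + 1))).eval 0 = (-1) ^ a * (2 * (a : ℤ) + 1) ∧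
    (Polynomial.derivative (F (3 * a + 2))).eval 0 = (-1) ^ a * ((a : ℤ) + 1) := by
  obtain ⟨_, _, _, h1, h2, h3⟩ := key a
  exact ⟨h1, h2, h3⟩
end

section
/- Fix k ≥ 1 and let q ∈ [1,k], j ∈ [1,q] with gcd(j,q) = 1. Write k = f*q + m with f = ⌊k/q⌋ and 0 ≤ m < q, and let M = m+1. Define s(q,j) = |{a ∈ [1,m] : (a*j mod q) ≤ (M*j mod q)}| and η(q,j) = k*⌊(k+1)*j/q⌋ - k + (M*j mod q)*f + s(q,j). Then η(q,j) lies in the interval [f, k² + k - f]. -/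
theorem stmt_12 (k q j : ℕ) (hk : 1 ≤ k) (hq : 1 ≤ q ∧ q ≤ k)
    (hj : 1 ≤ j ∧ j ≤ q) (hgcd : Nat.gcd j q = 1)
    (f m M : ℕ) (hf : f = k / q) (hm : m = k % q) (hM : M = m + 1)
    (s : ℕ) (hs : s = ((Finset.Icc 1 m).filter (fun a => (a * j) % q ≤ (M * j) % q)).card)
    (η : ℤ) (hη : η = (k : ℤ) * (((k + 1) * j) / q : ℕ) - k + ((M * j) % q : ℕ) * f + s) :
    (f : ℤ) ≤ η ∧ η ≤ (k : ℤ) ^ 2 + k - f := by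
  obtain ⟨hq1, hqk⟩ := hq
  obtain ⟨hj1, hjq⟩ := hj
  have hq0 : 0 < q := hq1
  set D : ℕ := ((k + 1) * j) / q with hD
  set r : ℕ := (M * j) % q with hr
  have hrq : r < q := Nat.mod_lt _ hq0
  have hsm : s ≤ m := by
    rw [hs]
    calc ((Finset.Icc 1 m).filter (fun a => (a * j) % q ≤ (M * j) % q)).card
        ≤ (Finset.Icc 1 m).card := Finset.card_filter_le _ _
      _ = m := by simp
  have hkm : q * f + m = k := by rw [hf, hm]; exact Nat.div_add_mod k q
  have hmq : m < q := by rw [hm]; exact Nat.mod_lt _ hq0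
  have hDub : D ≤ k + 1 := by
    rw [hD]
    calc ((k + 1) * j) / q ≤ ((k + 1) * q) / q :=
          Nat.div_le_div_right (Nat.mul_le_mul_left _ hjq)
      _ = k + 1 := by rw [Nat.mul_comm]; exact Nat.mul_div_cancel_left _ hq0
  -- cast facts to ℤ
  have hD1 : (D : ℤ) ≤ k + 1 := by exact_mod_cast hDub
  have hr1 : (r : ℤ) + 1 ≤ q := by exact_mod_cast hrq
  have hs1 : (s : ℤ) ≤ m := by exact_mod_cast hsm
  have hkm1 : (q : ℤ) * f + m = k := by exact_mod_cast hkm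
  have hf0 : (0 : ℤ) ≤ f := Int.natCast_nonneg f
  have hk1 : (1 : ℤ) ≤ k := by exact_mod_cast hk
  constructor
  · -- lower bound
    by_cases hMq : M < q
    · -- r ≥ 1
      have hrne : r ≠ 0 := by
        intro h0
        have hdvd : q ∣ M * j := Nat.dvd_iff_mod_eq_zero.mpr h0
        have hcop : Nat.Coprime q j := (Nat.coprime_comm.mp hgcd)
        have : q ∣ M := hcop.dvd_of_dvd_mul_right hdvd
        have : q ≤ M := Nat.le_of_dvd (by omega) this
        omega
      have hrge : (1 : ℤ) ≤ r := by
        have : 1 ≤ r := Nat.one_le_iff_ne_zero.2 hrne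
        exact_mod_cast this
      have hDge : 1 ≤ D := by
        rw [hD]
        rw [Nat.one_le_div_iff hq0]
        calc q ≤ k + 1 := by omega
          _ ≤ (k + 1) * j := Nat.le_mul_of_pos_right _ hj1
      have hDge' : (1 : ℤ) ≤ D := by exact_mod_cast hDge
      rw [hη]
      have hs0 : (0 : ℤ) ≤ s := Int.natCast_nonneg s
      nlinarith [mul_le_mul_of_nonneg_left hDge' (by linarith : (0:ℤ) ≤ (k:ℤ)),
        mul_le_mul_of_nonneg_right hrge hf0]
    · -- M = q
      have hMeq : M = q := by omega
      have hDge : f + 1 ≤ D := by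
        rw [hD]
        have hq' : q * (f + 1) = q * f + q := by ring
        have hk1q : k + 1 = q * (f + 1) := by omega
        calc f + 1 = (q * (f + 1)) / q := (Nat.mul_div_cancel_left _ hq0).symm
          _ = (k + 1) / q := by rw [hk1q]
          _ ≤ ((k + 1) * j) / q := Nat.div_le_div_right (Nat.le_mul_of_pos_right _ hj1)
      have hDge' : (f : ℤ) + 1 ≤ D := by exact_mod_cast hDge
      rw [hη]
      have hs0 : (0 : ℤ) ≤ s := Int.natCast_nonneg s
      have hr0 : (0 : ℤ) ≤ r := Int.natCast_nonneg r
      have e1 : (k:ℤ) * ((f:ℤ) + 1) = k * f + k := by ring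
      have hkf : (f:ℤ) ≤ k * f := le_mul_of_one_le_left hf0 hk1
      linarith [mul_le_mul_of_nonneg_left hDge' (by linarith : (0:ℤ) ≤ (k:ℤ)),
        mul_nonneg hr0 hf0]
  · rw [hη]
    have hm0 : (0 : ℤ) ≤ m := Int.natCast_nonneg m
    have e1 : (k:ℤ) * ((k:ℤ) + 1) = k ^ 2 + k := by ring
    have e2 : ((q:ℤ) - 1) * f = q * f - f := by ring
    linarith [mul_le_mul_of_nonneg_left hD1 (by linarith : (0:ℤ) ≤ (k:ℤ)),
      mul_le_mul_of_nonneg_right (by linarith : (r:ℤ) ≤ (q:ℤ) - 1) hf0]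
end

section
/- Fix k ≥ 1, q ∈ [1,k], j ∈ [1,q] with gcd(j,q) = 1, and w ∈ [1, f] where f = ⌊k/q⌋ and m = k mod q, M = m+1. For r ∈ [1, q-1] define t(r) = |{a ∈ [0,m] : (a*j mod q) < (r*j mod q)}| and c(r) = -1 - w + (r*j mod q)*f + t(r). Then the integers c(1), ..., c(q-1) are distinct and all lie in the interval [0, k - f - 1]. -/
/-!
Write `ρ r = r * j % q`. Since `j` is a unit mod `q`, `ρ` is injective on `[0, q)`, so `ρ r ≠ ρ 0 = 0`
for `r ∈ [1, q - 1]`. Both `t r` and `c r` depend on `r` only through `ρ r`: `c r = G (ρ r)` with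
`G x = -1 - w + x f + #{a ≤ m : ρ a < x}`, and `G` is strictly increasing because `f ≥ 1` and the
count is monotone in `x`. This gives injectivity. For the range, `1 ≤ ρ r ≤ q - 1` and
`1 ≤ t r ≤ m + 1` (the index `a = 0` is always counted), so with `k = q f + m` and `1 ≤ w ≤ f`,
`0 ≤ c r ≤ k - f - w ≤ k - f - 1`.
-/

open Finset

lemma Nat.mul_mod_injOn_Iio_of_coprime {j q : ℕ} (hjq : Nat.Coprime j q) :
    Set.InjOn (fun r => r * j % q) (Set.Iio q) := fun _ hr₁ _ hr₂ h =>
  (Nat.ModEq.cancel_right_of_coprime (Nat.coprime_comm.mp hjq) h).eq_of_lt_of_lt hr₁ hr₂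

lemma Nat.mul_mod_pos_of_coprime {j q r : ℕ} (hjq : Nat.Coprime j q) (hr₀ : 0 < r) (hrq : r < q) :
    0 < r * j % q := by
  refine Nat.pos_of_ne_zero fun h => hr₀.ne' ?_
  exact Nat.mul_mod_injOn_Iio_of_coprime hjq hrq (hr₀.trans hrq) (by simpa using h)

lemma Finset.monotone_card_filter_lt {α : Type*} (s : Finset α) (g : α → ℕ) :
    Monotone fun x => #(s.filter fun a => g a < x) := fun _ _ hxy =>
  card_le_card <| monotone_filter_right s fun _ _ ha => ha.trans_le hxy

lemma strictMono_add_mul_add_of_monotone {T : ℕ → ℕ} (hT : Monotone T) (b : ℤ) {f : ℕ}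
    (hf : 0 < f) : StrictMono fun x : ℕ => b + x * f + T x := by
  intro x y hxy
  have hmul : (x : ℤ) * f < y * f := by gcongr
  have hT' : (T x : ℤ) ≤ T y := by exact_mod_cast hT hxy.le
  dsimp only
  linarith

theorem stmt_13_general (k q j w : ℕ) (hq : 1 ≤ q ∧ q ≤ k)
    (hgcd : Nat.gcd j q = 1)
    (f m : ℕ) (hf : f = k / q) (hm : m = k % q)
    (hw : 1 ≤ w ∧ w ≤ f)
    (t : ℕ → ℕ)
    (ht : ∀ r, t r = ((Finset.Icc 0 m).filter (fun a => (a * j) % q < (r * j) % q)).card)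
    (c : ℕ → ℤ)
    (hc : ∀ r, c r = -1 - (w : ℤ) + ((r * j) % q : ℕ) * f + t r) :
    Set.InjOn c (Set.Icc 1 (q - 1)) ∧
    ∀ r ∈ Finset.Icc 1 (q - 1), 0 ≤ c r ∧ c r ≤ (k : ℤ) - f - 1 := by
  set T : ℕ → ℕ := fun x => #((Icc 0 m).filter fun a => a * j % q < x)
  have hcT : c = (fun x : ℕ => (-1 - w : ℤ) + x * f + T x) ∘ fun r => r * j % q :=
    funext fun r => by simp only [hc, ht, T, Function.comp_apply]
  refine ⟨?_, fun r hr => ?_⟩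
  · rw [hcT]
    refine (strictMono_add_mul_add_of_monotone (monotone_card_filter_lt _ _) _
      (hw.1.trans hw.2)).injective.comp_injOn ?_
    exact (Nat.mul_mod_injOn_Iio_of_coprime hgcd).mono fun r hr => by
      simp only [Set.mem_Icc, Set.mem_Iio] at hr ⊢; omega
  · obtain ⟨hr₁, hrq⟩ := Finset.mem_Icc.mp hr
    have hρ₀ : 0 < r * j % q := Nat.mul_mod_pos_of_coprime hgcd hr₁ (by omega)
    have hρq : r * j % q < q := Nat.mod_lt _ (by omega)
    have ht₀ : 0 < t r := ht r ▸ card_pos.mpr ⟨0, by simpa using hρ₀⟩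
    have htm : t r ≤ m + 1 := ht r ▸ (card_filter_le _ _).trans (by simp)
    have hk : (k : ℤ) = q * f + m := by rw [hf, hm]; exact_mod_cast (Nat.div_add_mod k q).symm
    have hρ₁ : (1 : ℤ) ≤ (r * j % q : ℕ) := by exact_mod_cast hρ₀
    have hρq' : ((r * j % q : ℕ) : ℤ) + 1 ≤ q := by exact_mod_cast hρq
    rw [hc]
    constructor <;> nlinarith [hw.1, hw.2]

theorem stmt_13 (k q j w : ℕ) (hk : 1 ≤ k) (hq : 1 ≤ q ∧ q ≤ k)
    (hj : 1 ≤ j ∧ j ≤ q) (hgcd : Nat.gcd j q = 1)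
    (f m M : ℕ) (hf : f = k / q) (hm : m = k % q) (hM : M = m + 1)
    (hw : 1 ≤ w ∧ w ≤ f)
    (t : ℕ → ℕ)
    (ht : ∀ r, t r = ((Finset.Icc 0 m).filter (fun a => (a * j) % q < (r * j) % q)).card)
    (c : ℕ → ℤ)
    (hc : ∀ r, c r = -1 - (w : ℤ) + ((r * j) % q : ℕ) * f + t r) :
    Set.InjOn c (Set.Icc 1 (q - 1)) ∧
    ∀ r ∈ Finset.Icc 1 (q - 1), 0 ≤ c r ∧ c r ≤ (k : ℤ) - f - 1 :=
  stmt_13_general k q j w hq hgcd f m hf hm hw t ht c hc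
end

section
/- As x → ∞, the sum ∑_{q=1}^{⌊x⌋} φ(q) is asymptotic to 3x²/π², i.e., the ratio of the sum to 3x²/π² tends to 1. -/
/-!
Inverting `∑_{d ∣ n} φ d = n` gives `∑_{q ≤ x} φ q = ∑_{d ≤ x} μ d · T ⌊x / d⌋` with
`T k = k (k + 1) / 2`. Since `T ⌊y⌋` differs from `y² / 2` by at most `y / 2`, the sum is
`x² / 2 · ∑_{d ≤ x} μ d / d² + O(x log x)`, and `∑ μ d / d² = 1 / ζ(2) = 6 / π²`.
-/

open Filter Topology ArithmeticFunction Finset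
open scoped ArithmeticFunction.Moebius LSeries.notation

lemma moebius_mul_id_apply (n : ℕ) :
    ((μ : ArithmeticFunction ℝ) * (ArithmeticFunction.id : ArithmeticFunction ℝ)) n =
      n.totient := by
  rcases n.eq_zero_or_pos with rfl | hn
  · simp
  have h := (sum_eq_iff_sum_mul_moebius_eq (R := ℝ) (f := fun n => (n.totient : ℝ))
    (g := fun n => (n : ℝ))).mp (fun m _ => by exact_mod_cast Nat.sum_totient m) n hn
  simpa [mul_apply] using h

lemma sum_Ioc_natCast (k : ℕ) : ∑ m ∈ Ioc 0 k, (m : ℝ) = k * (k + 1) / 2 := by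
  induction k with
  | zero => simp
  | succ k ih =>
    rw [sum_Ioc_succ_top (Nat.zero_le k), ih]
    push_cast
    ring

lemma sum_Icc_totient_eq_sum_moebius (N : ℕ) :
    ∑ q ∈ Icc 1 N, (q.totient : ℝ) =
      ∑ d ∈ Icc 1 N, (μ d : ℝ) * ((N / d : ℕ) * ((N / d : ℕ) + 1) / 2) := by
  -- `Icc 1 N` and `Ioc 0 N` are definitionally equal.
  calc ∑ q ∈ Icc 1 N, (q.totient : ℝ)
      = ∑ q ∈ Ioc 0 N,
          ((μ : ArithmeticFunction ℝ) * (ArithmeticFunction.id : ArithmeticFunction ℝ)) q :=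
        sum_congr rfl fun q _ => (moebius_mul_id_apply q).symm
    _ = ∑ d ∈ Ioc 0 N, (μ d : ℝ) * ∑ m ∈ Ioc 0 (N / d), (m : ℝ) := by
        rw [sum_Ioc_mul_eq_sum_sum]
        simp
    _ = _ := by simp_rw [sum_Ioc_natCast]; rfl

lemma abs_floor_mul_floor_add_one_sub_sq_le {x : ℝ} (hx : 0 ≤ x) :
    |(⌊x⌋₊ : ℝ) * (⌊x⌋₊ + 1) - x ^ 2| ≤ x := by
  have h₁ := Nat.floor_le hx
  have h₂ := Nat.lt_floor_add_one x
  rw [abs_le]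
  constructor <;> nlinarith

lemma abs_sum_Icc_totient_sub_le {x : ℝ} (hx : 0 ≤ x) :
    |∑ q ∈ Icc 1 ⌊x⌋₊, (q.totient : ℝ) - x ^ 2 / 2 * ∑ d ∈ Icc 1 ⌊x⌋₊, (μ d : ℝ) / d ^ 2| ≤
      x / 2 * harmonic ⌊x⌋₊ := by
  rw [sum_Icc_totient_eq_sum_moebius, mul_sum, ← sum_sub_distrib, harmonic_eq_sum_Icc]
  push_cast
  rw [mul_sum]
  refine (abs_sum_le_sum_abs _ _).trans (sum_le_sum fun d hd => ?_)
  have hd : (0 : ℝ) < d := by exact_mod_cast (mem_Icc.mp hd).1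
  have hμ : |(μ d : ℝ)| ≤ 1 := by exact_mod_cast abs_moebius_le_one
  rw [← Nat.floor_div_natCast]
  have key := abs_floor_mul_floor_add_one_sub_sq_le (div_nonneg hx hd.le)
  calc |(μ d : ℝ) * (⌊x / d⌋₊ * (⌊x / d⌋₊ + 1) / 2) - x ^ 2 / 2 * (μ d / d ^ 2)|
      = |(μ d : ℝ) * (⌊x / d⌋₊ * (⌊x / d⌋₊ + 1) - (x / d) ^ 2) / 2| := by ring_nf
    _ = |(μ d : ℝ)| * |⌊x / d⌋₊ * (⌊x / d⌋₊ + 1) - (x / d) ^ 2| / 2 := by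
        rw [abs_div, abs_mul, abs_two]
    _ ≤ 1 * (x / d) / 2 := by gcongr
    _ = x / 2 * (d : ℝ)⁻¹ := by ring

lemma LSeries_moebius_two : L ↗μ 2 = 6 / (Real.pi : ℂ) ^ 2 := by
  have h := LSeries_zeta_mul_Lseries_moebius (s := 2) (by norm_num)
  rw [LSeries_zeta_eq_riemannZeta (by norm_num), riemannZeta_two] at h
  rw [eq_div_iff (by simp [Real.pi_ne_zero])]
  linear_combination 6 * h

lemma hasSum_moebius_div_sq :
    HasSum (fun n : ℕ => (μ n : ℝ) / (n : ℝ) ^ 2) (6 / Real.pi ^ 2) := by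
  have h := (LSeriesSummable_moebius_iff.mpr (by norm_num : 1 < (2 : ℂ).re)).LSeriesHasSum
  rw [LSeries_moebius_two, LSeriesHasSum] at h
  rw [← Complex.hasSum_ofReal]
  convert h using 1
  · funext n
    rcases eq_or_ne n 0 with rfl | hn
    · simp
    · rw [LSeries.term_of_ne_zero hn]
      simp
  · push_cast; rfl

lemma tendsto_sum_Icc_moebius_div_sq :
    Tendsto (fun N : ℕ => ∑ d ∈ Icc 1 N, (μ d : ℝ) / (d : ℝ) ^ 2) atTop (𝓝 (6 / Real.pi ^ 2)) :=
  (hasSum_moebius_div_sq.tendsto_sum_nat.comp (tendsto_add_atTop_nat 1)).congr fun N => by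
    simp [sum_range_eq_add_Ico _ N.succ_pos]; rfl

lemma tendsto_harmonic_floor_div_atTop :
    Tendsto (fun x : ℝ => (harmonic ⌊x⌋₊ : ℝ) / x) atTop (𝓝 0) := by
  have hlog : Tendsto (fun x : ℝ => x⁻¹ + Real.log x / x) atTop (𝓝 0) := by
    simpa using
      tendsto_inv_atTop_zero.add (Real.tendsto_pow_log_div_mul_add_atTop 1 0 1 one_ne_zero)
  refine squeeze_zero' ?_ ?_ hlog <;> filter_upwards [eventually_ge_atTop 1] with x hx
  · have : (0 : ℝ) < harmonic ⌊x⌋₊ := by exact_mod_cast harmonic_pos (Nat.floor_pos.mpr hx).ne'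
    positivity
  calc (harmonic ⌊x⌋₊ : ℝ) / x ≤ (1 + Real.log x) / x := by
        gcongr
        exact harmonic_floor_le_one_add_log x hx
    _ = x⁻¹ + Real.log x / x := by ring

lemma tendsto_sum_Icc_totient_div_sq :
    Tendsto (fun x : ℝ => (∑ q ∈ Icc 1 ⌊x⌋₊, (q.totient : ℝ)) / x ^ 2) atTop
      (𝓝 (3 / Real.pi ^ 2)) := by
  have hP : Tendsto (fun x : ℝ => (∑ d ∈ Icc 1 ⌊x⌋₊, (μ d : ℝ) / (d : ℝ) ^ 2) / 2) atTop
      (𝓝 (3 / Real.pi ^ 2)) := by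
    have h := (tendsto_sum_Icc_moebius_div_sq.comp (tendsto_nat_floor_atTop (α := ℝ))).div_const 2
    rwa [div_div, show (6 : ℝ) / (Real.pi ^ 2 * 2) = 3 / Real.pi ^ 2 by ring] at h
  have hdiff : Tendsto (fun x : ℝ => (∑ q ∈ Icc 1 ⌊x⌋₊, (q.totient : ℝ)) / x ^ 2 -
      (∑ d ∈ Icc 1 ⌊x⌋₊, (μ d : ℝ) / (d : ℝ) ^ 2) / 2) atTop (𝓝 0) := by
    refine squeeze_zero_norm' ?_ (by simpa using tendsto_harmonic_floor_div_atTop.div_const 2)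
    filter_upwards [eventually_gt_atTop 0] with x hx
    rw [Real.norm_eq_abs]
    calc _ = |(∑ q ∈ Icc 1 ⌊x⌋₊, (q.totient : ℝ) -
            x ^ 2 / 2 * ∑ d ∈ Icc 1 ⌊x⌋₊, (μ d : ℝ) / d ^ 2) / x ^ 2| := by
          congr 1
          field_simp
      _ ≤ x / 2 * harmonic ⌊x⌋₊ / x ^ 2 := by
          rw [abs_div, abs_sq]
          gcongr
          exact abs_sum_Icc_totient_sub_le hx.le
      _ = harmonic ⌊x⌋₊ / x / 2 := by field_simp
  simpa using hdiff.add hP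

theorem stmt_16 :
    Tendsto (fun x : ℝ => (∑ q ∈ Finset.Icc 1 ⌊x⌋₊, (Nat.totient q : ℝ)) /
      (3 * x ^ 2 / Real.pi ^ 2)) atTop (𝓝 1) := by
  have h := tendsto_sum_Icc_totient_div_sq.const_mul (Real.pi ^ 2 / 3)
  rw [show Real.pi ^ 2 / 3 * (3 / Real.pi ^ 2) = 1 by field_simp] at h
  refine h.congr' ?_
  filter_upwards [eventually_ne_atTop 0] with x hx
  field_simp
end

section
/- Fix integers n and k ≥ 1 and consider the directed graph G(n,k) on vertices {0,...,k} with edges E(i) = ((i+n-2) mod (k+1)) → ((i+n-1) mod k), 1 ≤ i ≤ k. The map sending vertex k to k and every other vertex a ∈ {0,...,k-1} to k-1-a is an isomorphism of directed graphs from G(n,k) to G(k²-k-n, k). -/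
/-- `a → b` is an edge of the directed graph `G(n,k)`. -/
def GEdge (n : ℤ) (k : ℕ) (a b : ℤ) : Prop :=
  ∃ i : ℤ, 1 ≤ i ∧ i ≤ (k : ℤ) ∧ a = (i + n - 2) % ((k : ℤ) + 1) ∧ b = (i + n - 1) % (k : ℤ)

lemma emod_eq_of' (x r m q : ℤ) (h : x = m * q + r) (h0 : 0 ≤ r) (h1 : r < m) :
    x % m = r := by
  subst h
  rw [add_comm, Int.add_mul_emod_self_left, Int.emod_eq_of_lt h0 h1]

lemma key_s17 (n : ℤ) (k : ℕ) (hk : 1 ≤ k) (a b : ℤ) (h : GEdge n k a b) :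
    GEdge ((k : ℤ) ^ 2 - k - n) k
      (if a = (k : ℤ) then (k : ℤ) else (k : ℤ) - 1 - a)
      (if b = (k : ℤ) then (k : ℤ) else (k : ℤ) - 1 - b) := by
  obtain ⟨i, hi1, hi2, ha, hb⟩ := h
  have hk0 : (0 : ℤ) < (k : ℤ) := by exact_mod_cast hk
  have hk1 : (0 : ℤ) < (k : ℤ) + 1 := by omega
  have hq : i + n - 2 = ((k : ℤ) + 1) * ((i + n - 2) / ((k : ℤ) + 1)) + a := by
    rw [ha]; exact (Int.mul_ediv_add_emod _ _).symm
  have hp : i + n - 1 = (k : ℤ) * ((i + n - 1) / (k : ℤ)) + b := by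
    rw [hb]; exact (Int.mul_ediv_add_emod _ _).symm
  set q := (i + n - 2) / ((k : ℤ) + 1) with hqdef
  set p := (i + n - 1) / (k : ℤ) with hpdef
  have ha0 : 0 ≤ a := ha ▸ Int.emod_nonneg _ (by omega)
  have ha1 : a < (k : ℤ) + 1 := ha ▸ Int.emod_lt_of_pos _ hk1
  have hb0 : 0 ≤ b := hb ▸ Int.emod_nonneg _ (by omega)
  have hb1 : b < (k : ℤ) := hb ▸ Int.emod_lt_of_pos _ hk0
  refine ⟨(k : ℤ) + 1 - i, by omega, by omega, ?_, ?_⟩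
  · by_cases hak : a = (k : ℤ)
    · rw [if_pos hak]
      refine (emod_eq_of' _ _ _ ((k : ℤ) - 3 - q) ?_ (by omega) (by omega)).symm
      linear_combination -hq - hak
    · rw [if_neg hak]
      refine (emod_eq_of' _ _ _ ((k : ℤ) - 2 - q) ?_ (by omega) (by omega)).symm
      linear_combination -hq
  · have hbk : b ≠ (k : ℤ) := by omega
    rw [if_neg hbk]
    refine (emod_eq_of' _ _ _ ((k : ℤ) - p - 1) ?_ (by omega) (by omega)).symm
    linear_combination -hp

theorem stmt_17 (n : ℤ) (k : ℕ) (hk : 1 ≤ k)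
    (φ : ℤ → ℤ) (hφ : ∀ a, φ a = if a = (k : ℤ) then (k : ℤ) else (k : ℤ) - 1 - a) :
    Set.BijOn φ (Set.Icc 0 (k : ℤ)) (Set.Icc 0 (k : ℤ)) ∧
    ∀ a b : ℤ, a ∈ Set.Icc 0 (k : ℤ) → b ∈ Set.Icc 0 (k : ℤ) →
      (GEdge n k a b ↔ GEdge ((k : ℤ) ^ 2 - k - n) k (φ a) (φ b)) := by
  have hk0 : (0 : ℤ) < (k : ℤ) := by exact_mod_cast hk
  have hmaps : ∀ a ∈ Set.Icc (0:ℤ) (k:ℤ), φ a ∈ Set.Icc (0:ℤ) (k:ℤ) := by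
    intro a ha
    simp only [Set.mem_Icc] at ha ⊢
    rw [hφ]; split_ifs <;> omega
  have hinv : ∀ a ∈ Set.Icc (0:ℤ) (k:ℤ), φ (φ a) = a := by
    intro a ha
    simp only [Set.mem_Icc] at ha
    rw [hφ a]
    by_cases hak : a = (k : ℤ)
    · rw [if_pos hak, hφ, if_pos rfl, hak]
    · rw [if_neg hak, hφ, if_neg (by omega)]
      ring
  constructor
  · refine ⟨hmaps, ?_, ?_⟩
    · intro x hx y hy hxy
      have := hinv x hx
      rw [hxy, hinv y hy] at this
      exact this.symm
    · intro y hy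
      exact ⟨φ y, hmaps y hy, hinv y hy⟩
  · intro a b ha hb
    simp only [Set.mem_Icc] at ha hb
    constructor
    · intro h
      have h2 := key_s17 n k hk a b h
      rwa [← hφ a, ← hφ b] at h2
    · intro h
      have h2 := key_s17 _ k hk _ _ h
      rw [← hφ (φ a), ← hφ (φ b), hinv a (Set.mem_Icc.mpr ha),
        hinv b (Set.mem_Icc.mpr hb)] at h2
      have he : (k : ℤ) ^ 2 - (k : ℤ) - ((k : ℤ) ^ 2 - (k : ℤ) - n) = n := by ring
      rwa [he] at h2
end

section
/- For n = 2ν even with 2ν - 1 ≥ k ≥ ν - 1 ≥ 1 and k ≡ 2ν + 1 (mod 3), the zero x = 0 of the determinant polynomial D(2ν,k,x) = det A(2ν,k,x) has multiplicity exactly 2; that is, D(2ν,k,0) = 0 and the coefficient of x² in D(2ν,k,x) is nonzero while the coefficient of x is zero. -/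
open Polynomial

/-- The `n × n` skew-symmetric Toeplitz payoff matrix `A(n,k,x)` with the
indeterminate `x`, as a matrix of rational polynomials. -/
noncomputable def Apoly (n k : ℕ) : Matrix (Fin n) (Fin n) (Polynomial ℚ) :=
  fun r s =>
    if (r : ℕ) < (s : ℕ) then (if (s : ℕ) - (r : ℕ) ≤ k then 1 else -X)
    else if (s : ℕ) < (r : ℕ) then (if (r : ℕ) - (s : ℕ) ≤ k then -1 else X)
    else 0

/-- The determinant polynomial `D(n,k,x)`. -/
noncomputable def D (n k : ℕ) : Polynomial ℚ := (Apoly n k).det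

open Matrix

namespace S19

def p3 (i : ℕ) : ℚ := if i % 3 = 0 then 1 else if i % 3 = 1 then -1 else 0
def q3 (i : ℕ) : ℚ := if i % 3 = 0 then 1 else if i % 3 = 1 then 0 else -1
def t3 (i : ℕ) : ℚ := if i % 3 = 0 then 0 else if i % 3 = 1 then 1 else -1

def bb (k r s : ℕ) : ℚ :=
  if r < s then (if s - r ≤ k then 1 else 0)
  else if s < r then (if r - s ≤ k then -1 else 0) else 0

def ee (k r s : ℕ) : ℚ :=
  if r + k + 1 ≤ s then -1 else if s + k + 1 ≤ r then 1 else 0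

def vv (n k i : ℕ) : ℚ :=
  if i + k + 1 < n then p3 i else if i ≤ k then (-1)^(i+k) else t3 (n - 1 - i)

def ww (n k i : ℕ) : ℚ :=
  if i + k + 1 < n then q3 i else if i ≤ k then 0 else q3 (n - 1 - i)

def BM (n k : ℕ) : Matrix (Fin n) (Fin n) ℚ := Matrix.of fun r s => bb k r s
def EM (n k : ℕ) : Matrix (Fin n) (Fin n) ℚ := Matrix.of fun r s => ee k r s

lemma Apoly_eq (n k : ℕ) :
    Apoly n k = (BM n k).map C + (X : ℚ[X]) • (EM n k).map C := by
  funext r s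
  simp only [Apoly, BM, EM, bb, ee, Matrix.map_apply, Matrix.add_apply, Matrix.smul_apply,
    Matrix.of_apply, smul_eq_mul]
  split_ifs <;> first
    | (exfalso; omega)
    | (simp only [map_zero, Polynomial.C_1, map_neg]; ring)

lemma updateCol_mulVec {n : ℕ} (A : Matrix (Fin n) (Fin n) ℚ) (j : Fin n)
    (u x : Fin n → ℚ) :
    (A.updateCol j u) *ᵥ x = A *ᵥ (Function.update x j 0) + x j • u := by
  funext r
  simp only [Matrix.mulVec, dotProduct, Pi.add_apply, Pi.smul_apply, smul_eq_mul]
  rw [← Finset.sum_erase_add _ _ (Finset.mem_univ j),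
      ← Finset.sum_erase_add _ _ (Finset.mem_univ j)]
  have h1 : ∀ c ∈ Finset.univ.erase j,
      A.updateCol j u r c * x c = A r c * (Function.update x j 0 c) := by
    intro c hc
    rcases Finset.mem_erase.mp hc with ⟨hcj, -⟩
    rw [Matrix.updateCol_apply, if_neg hcj, Function.update_of_ne hcj]
  rw [Finset.sum_congr rfl h1]
  simp [Matrix.updateCol_apply, Function.update_self]
  ring

/-- The abstract linear-algebra core. -/
lemma key {n : ℕ} (B E : Matrix (Fin n) (Fin n) ℚ) (v w : Fin n → ℚ) (i0 i1 : Fin n)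
    (hne : i0 ≠ i1) (hBskew : Bᵀ = -B) (hEskew : Eᵀ = -E)
    (hBv : B *ᵥ v = 0) (hBw : B *ᵥ w = 0)
    (hvEw : v ⬝ᵥ (E *ᵥ w) ≠ 0)
    (hv0 : v i0 = 1) (hv1 : v i1 = 0) (hw0 : w i0 = 1) (hw1 : w i1 = 1)
    (huniq : ∀ y : Fin n → ℚ, B *ᵥ y = 0 → y i0 = 0 → y i1 = 0 → y = 0) :
    ((B.map C + (X:ℚ[X]) • E.map C).det.coeff 0 = 0) ∧
    ((B.map C + (X:ℚ[X]) • E.map C).det.coeff 1 = 0) ∧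
    ((B.map C + (X:ℚ[X]) • E.map C).det.coeff 2 ≠ 0) := by
  classical
  set M : Matrix (Fin n) (Fin n) ℚ[X] := B.map C + (X:ℚ[X]) • E.map C with hMdef
  have hM : ∀ r c, M r c = C (B r c) + X * C (E r c) := by
    intro r c
    simp [hMdef, Matrix.add_apply, Matrix.smul_apply, Matrix.map_apply, smul_eq_mul]
  set P : Matrix (Fin n) (Fin n) ℚ :=
    ((1 : Matrix (Fin n) (Fin n) ℚ).updateCol i0 v).updateCol i1 w with hPdef
  -- skew consequences
  have hvB : v ᵥ* B = 0 := by
    rw [← Matrix.mulVec_transpose, hBskew, Matrix.neg_mulVec, hBv, neg_zero]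
  have hwB : w ᵥ* B = 0 := by
    rw [← Matrix.mulVec_transpose, hBskew, Matrix.neg_mulVec, hBw, neg_zero]
  have hEtrans : ∀ u : Fin n → ℚ, u ᵥ* E = -(E *ᵥ u) := by
    intro u; rw [← Matrix.mulVec_transpose, hEskew, Matrix.neg_mulVec]
  have hvEv : v ⬝ᵥ (E *ᵥ v) = 0 := by
    have h1 : v ⬝ᵥ (E *ᵥ v) = -(v ⬝ᵥ (E *ᵥ v)) := by
      calc v ⬝ᵥ (E *ᵥ v) = (v ᵥ* E) ⬝ᵥ v := Matrix.dotProduct_mulVec v E v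
        _ = (-(E *ᵥ v)) ⬝ᵥ v := by rw [hEtrans]
        _ = -((E *ᵥ v) ⬝ᵥ v) := neg_dotProduct _ _
        _ = -(v ⬝ᵥ (E *ᵥ v)) := by rw [dotProduct_comm]
    linarith
  have hwEw : w ⬝ᵥ (E *ᵥ w) = 0 := by
    have h1 : w ⬝ᵥ (E *ᵥ w) = -(w ⬝ᵥ (E *ᵥ w)) := by
      calc w ⬝ᵥ (E *ᵥ w) = (w ᵥ* E) ⬝ᵥ w := Matrix.dotProduct_mulVec w E w
        _ = (-(E *ᵥ w)) ⬝ᵥ w := by rw [hEtrans]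
        _ = -((E *ᵥ w) ⬝ᵥ w) := neg_dotProduct _ _
        _ = -(w ⬝ᵥ (E *ᵥ w)) := by rw [dotProduct_comm]
    linarith
  have hwEv : w ⬝ᵥ (E *ᵥ v) = -(v ⬝ᵥ (E *ᵥ w)) := by
    calc w ⬝ᵥ (E *ᵥ v) = (w ᵥ* E) ⬝ᵥ v := Matrix.dotProduct_mulVec w E v
      _ = (-(E *ᵥ w)) ⬝ᵥ v := by rw [hEtrans]
      _ = -((E *ᵥ w) ⬝ᵥ v) := neg_dotProduct _ _
      _ = -(v ⬝ᵥ (E *ᵥ w)) := by rw [dotProduct_comm]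
  -- column computation
  have col : ∀ (u : Fin n → ℚ) (r : Fin n),
      (∑ j, M r j * C (u j)) = C ((B *ᵥ u) r) + X * C ((E *ᵥ u) r) := by
    intro u r
    have h1 : ∀ j : Fin n, M r j * C (u j) = C (B r j * u j) + X * C (E r j * u j) := by
      intro j; rw [hM, _root_.map_mul, _root_.map_mul]; ring
    rw [Finset.sum_congr rfl (fun j _ => h1 j), Finset.sum_add_distrib]
    rw [← Finset.mul_sum, ← map_sum, ← map_sum]
    rfl
  set fv : Fin n → ℚ[X] := fun r => C ((E *ᵥ v) r) with hfv
  set fw : Fin n → ℚ[X] := fun r => C ((E *ᵥ w) r) with hfw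
  have hMP : M * P.map C =
      (M.updateCol i0 ((X:ℚ[X]) • fv)).updateCol i1 ((X:ℚ[X]) • fw) := by
    funext r c
    rw [Matrix.mul_apply]
    by_cases hc1 : c = i1
    · subst hc1
      have : ∀ j, P j c * 1 = P j c := fun j => mul_one _
      have hPc : ∀ j : Fin n, P j c = w j := by
        intro j; simp [hPdef, Matrix.updateCol_apply]
      simp only [Matrix.map_apply]
      rw [Finset.sum_congr rfl (fun j _ => by rw [hPc j])]
      rw [col w r]
      have : (B *ᵥ w) r = 0 := by rw [hBw]; rfl
      rw [this, map_zero, zero_add]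
      simp [Matrix.updateCol_apply, hfw, smul_eq_mul]
    · by_cases hc0 : c = i0
      · subst hc0
        have hPc : ∀ j : Fin n, P j c = v j := by
          intro j; simp [hPdef, Matrix.updateCol_apply, Ne.symm hc1, hc1]
        simp only [Matrix.map_apply]
        rw [Finset.sum_congr rfl (fun j _ => by rw [hPc j])]
        rw [col v r]
        have : (B *ᵥ v) r = 0 := by rw [hBv]; rfl
        rw [this, map_zero, zero_add]
        simp [Matrix.updateCol_apply, hc1, hfv, smul_eq_mul]
      · have hPc : ∀ j : Fin n, P j c = if j = c then 1 else 0 := by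
          intro j; simp [hPdef, Matrix.updateCol_apply, hc0, hc1, Matrix.one_apply]
        simp only [Matrix.map_apply]
        rw [Finset.sum_congr rfl (fun j _ => by rw [hPc j])]
        have : ∀ j : Fin n, M r j * C (if j = c then (1:ℚ) else 0)
            = if j = c then M r j else 0 := by
          intro j; split_ifs <;> simp
        rw [Finset.sum_congr rfl (fun j _ => this j), Finset.sum_ite_eq' Finset.univ c]
        simp [Matrix.updateCol_apply, hc0, hc1]
  -- swap update columns
  have swap : ∀ (A : Matrix (Fin n) (Fin n) ℚ[X]) (f g : Fin n → ℚ[X]),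
      (A.updateCol i0 f).updateCol i1 g = (A.updateCol i1 g).updateCol i0 f := by
    intro A f g
    funext r c
    simp only [Matrix.updateCol_apply]
    rcases eq_or_ne c i1 with h1 | h1 <;> rcases eq_or_ne c i0 with h0 | h0
    · exact absurd (h0.symm.trans h1) hne
    · simp [h1, h0, Ne.symm hne]
    · simp [h1, h0, hne]
    · simp [h1, h0]
  set G : Matrix (Fin n) (Fin n) ℚ[X] := (M.updateCol i0 fv).updateCol i1 fw with hG
  have hdet : M.det * C P.det = X * (X * G.det) := by
    have e1 : M.det * C P.det = (M * P.map C).det := by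
      rw [Matrix.det_mul, RingHom.map_det, RingHom.mapMatrix_apply]
    rw [e1, hMP, Matrix.det_updateCol_smul]
    rw [swap M ((X:ℚ[X]) • fv) fw, Matrix.det_updateCol_smul, ← swap M fv fw]
  -- N : the scalar matrix whose determinant is the second coefficient (up to det P)
  set N : Matrix (Fin n) (Fin n) ℚ :=
    (B.updateCol i0 (E *ᵥ v)).updateCol i1 (E *ᵥ w) with hN
  have hGmap : G.map (evalRingHom 0) = N := by
    funext r c
    simp only [Matrix.map_apply, hG, hN, Matrix.updateCol_apply, coe_evalRingHom]
    rcases eq_or_ne c i1 with h1 | h1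
    · simp [h1, hfw, hne]
    · rcases eq_or_ne c i0 with h0 | h0
      · simp [h1, h0, hfv, hne]
      · simp [h1, h0, hM r c]
  have hc2 : M.det.coeff 2 * P.det = N.det := by
    have := congrArg (fun p : ℚ[X] => p.coeff 2) hdet
    simp only [coeff_mul_C] at this
    rw [this]
    rw [show (2:ℕ) = 1 + 1 from rfl, coeff_X_mul, show (1:ℕ) = 0 + 1 from rfl, coeff_X_mul]
    rw [coeff_zero_eq_eval_zero]
    have : eval 0 G.det = (evalRingHom 0) G.det := rfl
    rw [this, RingHom.map_det, RingHom.mapMatrix_apply, hGmap]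
  have hc0 : M.det.coeff 0 * P.det = 0 := by
    have := congrArg (fun p : ℚ[X] => p.coeff 0) hdet
    simp only [coeff_mul_C] at this
    rw [this, mul_coeff_zero, coeff_X_zero, zero_mul]
  have hc1 : M.det.coeff 1 * P.det = 0 := by
    have := congrArg (fun p : ℚ[X] => p.coeff 1) hdet
    simp only [coeff_mul_C] at this
    rw [this, show (1:ℕ) = 0 + 1 from rfl, coeff_X_mul, mul_coeff_zero, coeff_X_zero,
      zero_mul]
  -- det P is nonzero
  have hPne : P.det ≠ 0 := by
    intro h
    obtain ⟨x, hx0, hxk⟩ := Matrix.exists_mulVec_eq_zero_iff.mpr h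
    rw [hPdef, updateCol_mulVec, updateCol_mulVec, Matrix.one_mulVec] at hxk
    have hi1 : x i1 = 0 := by
      have := congrFun hxk i1
      simpa [Function.update_of_ne (Ne.symm hne), Function.update_self, hv1, hw1] using this
    have hi0 : x i0 = 0 := by
      have := congrFun hxk i0
      simpa [Function.update_of_ne hne, Function.update_self, hv0, hw0, hi1] using this
    apply hx0
    funext c
    rcases eq_or_ne c i1 with h1 | h1
    · rw [h1]; exact hi1
    · rcases eq_or_ne c i0 with h0 | h0
      · rw [h0]; exact hi0
      · have := congrFun hxk c
        simpa [Function.update_of_ne h1, Function.update_of_ne h0,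
          Function.update_of_ne hne, hi0, hi1] using this
  have hNne : N.det ≠ 0 := by
    intro h
    obtain ⟨x, hx0, hxk⟩ := Matrix.exists_mulVec_eq_zero_iff.mpr h
    rw [hN, updateCol_mulVec, updateCol_mulVec, Function.update_of_ne hne] at hxk
    set x' : Fin n → ℚ := Function.update (Function.update x i1 0) i0 0 with hx'
    have hBx'v : v ⬝ᵥ (B *ᵥ x') = 0 := by
      rw [Matrix.dotProduct_mulVec, hvB, zero_dotProduct]
    have hBx'w : w ⬝ᵥ (B *ᵥ x') = 0 := by
      rw [Matrix.dotProduct_mulVec, hwB, zero_dotProduct]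
    have hdv := congrArg (fun z => v ⬝ᵥ z) hxk
    simp only [dotProduct_add, dotProduct_smul, smul_eq_mul,
      dotProduct_zero] at hdv
    rw [hBx'v, hvEv] at hdv
    have hx1 : x i1 = 0 := by
      have hz : x i1 * (v ⬝ᵥ (E *ᵥ w)) = 0 := by linarith
      exact (mul_eq_zero.mp hz).resolve_right hvEw
    have hdw := congrArg (fun z => w ⬝ᵥ z) hxk
    simp only [dotProduct_add, dotProduct_smul, smul_eq_mul,
      dotProduct_zero] at hdw
    rw [hBx'w, hwEw, hwEv] at hdw
    have hx00 : x i0 = 0 := by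
      have hz : x i0 * (v ⬝ᵥ (E *ᵥ w)) = 0 := by linarith
      exact (mul_eq_zero.mp hz).resolve_right hvEw
    have hBz : B *ᵥ x' = 0 := by
      rw [hx00, hx1, zero_smul, zero_smul, add_zero, add_zero] at hxk
      exact hxk
    have hx'0 : x' i0 = 0 := Function.update_self _ _ _
    have hx'1 : x' i1 = 0 := by
      rw [hx', Function.update_of_ne (Ne.symm hne), Function.update_self]
    have hzz := huniq x' hBz hx'0 hx'1
    apply hx0; funext c
    rcases eq_or_ne c i1 with h1 | h1
    · rw [h1]; exact hx1
    rcases eq_or_ne c i0 with h0 | h0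
    · rw [h0]; exact hx00
    · have hcc : x' c = 0 := congrFun hzz c
      rw [hx', Function.update_of_ne h0, Function.update_of_ne h1] at hcc
      exact hcc
  refine ⟨?_, ?_, ?_⟩
  · exact (mul_eq_zero.mp hc0).resolve_right hPne
  · exact (mul_eq_zero.mp hc1).resolve_right hPne
  · intro hz
    rw [hz, zero_mul] at hc2
    exact hNne hc2.symm

/-! ### pattern evaluation lemmas -/

lemma p3_0 {i : ℕ} (h : i % 3 = 0) : p3 i = 1 := by simp [p3, h]
lemma p3_1 {i : ℕ} (h : i % 3 = 1) : p3 i = -1 := by simp [p3, h]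
lemma p3_2 {i : ℕ} (h : i % 3 = 2) : p3 i = 0 := by simp [p3, h]
lemma q3_0 {i : ℕ} (h : i % 3 = 0) : q3 i = 1 := by simp [q3, h]
lemma q3_1 {i : ℕ} (h : i % 3 = 1) : q3 i = 0 := by simp [q3, h]
lemma q3_2 {i : ℕ} (h : i % 3 = 2) : q3 i = -1 := by simp [q3, h]
lemma t3_0 {i : ℕ} (h : i % 3 = 0) : t3 i = 0 := by simp [t3, h]
lemma t3_1 {i : ℕ} (h : i % 3 = 1) : t3 i = 1 := by simp [t3, h]
lemma t3_2 {i : ℕ} (h : i % 3 = 2) : t3 i = -1 := by simp [t3, h]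

/-! ### sum helpers -/

lemma sum_per3 (g : ℕ → ℚ) (hper : ∀ i, g (i + 3) = g i)
    (hsum : g 0 + g 1 + g 2 = 0) : ∀ a : ℕ, ∑ i ∈ Finset.range (3 * a), g i = 0 := by
  have hshift : ∀ a j, g (3 * a + j) = g j := by
    intro a
    induction a with
    | zero => intro j; simp
    | succ b ih =>
      intro j
      have : 3 * (b + 1) + j = (3 * b + j) + 3 := by ring
      rw [this, hper, ih]
  intro a
  induction a with
  | zero => simp
  | succ b ih =>
    have h3 : 3 * (b + 1) = (3 * b) + 1 + 1 + 1 := by ring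
    rw [h3, Finset.sum_range_succ, Finset.sum_range_succ, Finset.sum_range_succ, ih]
    have e0 : g (3 * b) = g 0 := by have := hshift b 0; simpa using this
    have e1 : g (3 * b + 1) = g 1 := hshift b 1
    have e2 : g (3 * b + 1 + 1) = g 2 := by
      rw [show 3 * b + 1 + 1 = 3 * b + 2 from by ring]; exact hshift b 2
    rw [e0, e1, e2]
    linarith

lemma sum_alt (c : ℕ) : ∀ m : ℕ, ∑ i ∈ Finset.range (2 * m), ((-1 : ℚ)) ^ (c + i) = 0 := by
  intro m
  induction m with
  | zero => simp
  | succ b ih =>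
    have h2 : 2 * (b + 1) = (2 * b) + 1 + 1 := by ring
    rw [h2, Finset.sum_range_succ, Finset.sum_range_succ, ih]
    have : (-1 : ℚ) ^ (c + (2 * b + 1)) = -(-1 : ℚ) ^ (c + 2 * b) := by
      rw [show c + (2 * b + 1) = (c + 2 * b) + 1 from by ring, pow_succ]
      ring
    rw [this]
    ring

/-- Value of the partial sums of `t3`. -/
lemma sum_t3 : ∀ L : ℕ, ∑ i ∈ Finset.range L, t3 i = if L % 3 = 2 then 1 else 0 := by
  intro L
  induction L with
  | zero => simp
  | succ b ih =>
    rw [Finset.sum_range_succ, ih]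
    have h3 : b % 3 = 0 ∨ b % 3 = 1 ∨ b % 3 = 2 := by omega
    rcases h3 with h | h | h
    · rw [t3_0 h]; have : (b+1) % 3 = 1 := by omega
      simp [h, this]
    · rw [t3_1 h]; have : (b+1) % 3 = 2 := by omega
      simp [h, this]
    · rw [t3_2 h]; have : (b+1) % 3 = 0 := by omega
      simp [h, this]

/-- Value of the partial sums of `q3`. -/
lemma sum_q3 : ∀ L : ℕ, ∑ i ∈ Finset.range L, q3 i
    = if L % 3 = 0 then 0 else 1 := by
  intro L
  induction L with
  | zero => simp
  | succ b ih =>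
    rw [Finset.sum_range_succ, ih]
    have h3 : b % 3 = 0 ∨ b % 3 = 1 ∨ b % 3 = 2 := by omega
    rcases h3 with h | h | h
    · rw [q3_0 h]; have : (b+1) % 3 = 1 := by omega
      simp [h, this]
    · rw [q3_1 h]; have : (b+1) % 3 = 2 := by omega
      simp [h, this]
    · rw [q3_2 h]; have : (b+1) % 3 = 0 := by omega
      simp [h, this]

/-! ### the row-difference formula -/

set_option maxHeartbeats 2000000 in
lemma row_diff (n k : ℕ) (hk : 1 ≤ k) (y : ℕ → ℚ) (r : ℕ) (hr : r + 1 < n) :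
    (∑ s ∈ Finset.range n, bb k r s * y s) - (∑ s ∈ Finset.range n, bb k (r+1) s * y s)
    = y r + y (r+1) - (if r + k + 1 < n then y (r+k+1) else 0)
      - (if k ≤ r then y (r-k) else 0) := by
  rw [← Finset.sum_sub_distrib]
  have hptwise : ∀ s ∈ Finset.range n, bb k r s * y s - bb k (r+1) s * y s =
      ((if s = r then y s else 0) + (if s = r+1 then y s else 0)
      - (if s = r+k+1 then y s else 0)) - (if k ≤ r ∧ s = r - k then y s else 0) := by
    intro s hs
    unfold bb
    split_ifs <;> first | ring1 | (exfalso; omega)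
  rw [Finset.sum_congr rfl hptwise]
  rw [Finset.sum_sub_distrib, Finset.sum_sub_distrib, Finset.sum_add_distrib]
  rw [Finset.sum_ite_eq' (Finset.range n) r, Finset.sum_ite_eq' (Finset.range n) (r+1),
    Finset.sum_ite_eq' (Finset.range n) (r+k+1)]
  have h1 : (if r ∈ Finset.range n then y r else 0) = y r := by
    rw [if_pos (Finset.mem_range.mpr (by omega))]
  have h2 : (if r+1 ∈ Finset.range n then y (r+1) else 0) = y (r+1) := by
    rw [if_pos (Finset.mem_range.mpr hr)]
  have h3 : (if r+k+1 ∈ Finset.range n then y (r+k+1) else 0)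
      = (if r + k + 1 < n then y (r+k+1) else 0) := by
    simp [Finset.mem_range]
  have h4 : (∑ s ∈ Finset.range n, if k ≤ r ∧ s = r - k then y s else 0)
      = (if k ≤ r then y (r-k) else 0) := by
    by_cases hkr : k ≤ r
    · simp only [hkr, true_and, if_pos]
      rw [Finset.sum_ite_eq' (Finset.range n) (r-k)]
      rw [if_pos (Finset.mem_range.mpr (by omega))]
    · simp [hkr]
  rw [h1, h2, h3, h4]

lemma p3_period (i : ℕ) : p3 (i + 3) = p3 i := by simp [p3, Nat.add_mod_right]
lemma q3_period (i : ℕ) : q3 (i + 3) = q3 i := by simp [q3, Nat.add_mod_right]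

lemma vv_head {n k i : ℕ} (h : i + k + 1 < n) : vv n k i = p3 i := by simp [vv, h]
lemma vv_mid {n k i : ℕ} (h1 : ¬ (i + k + 1 < n)) (h2 : i ≤ k) :
    vv n k i = (-1)^(i+k) := by simp [vv, h1, h2]
lemma vv_tail {n k i : ℕ} (h1 : ¬ (i + k + 1 < n)) (h2 : ¬ i ≤ k) :
    vv n k i = t3 (n - 1 - i) := by simp [vv, h1, h2]
lemma ww_head {n k i : ℕ} (h : i + k + 1 < n) : ww n k i = q3 i := by simp [ww, h]
lemma ww_mid {n k i : ℕ} (h1 : ¬ (i + k + 1 < n)) (h2 : i ≤ k) :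
    ww n k i = 0 := by simp [ww, h1, h2]
lemma ww_tail {n k i : ℕ} (h1 : ¬ (i + k + 1 < n)) (h2 : ¬ i ≤ k) :
    ww n k i = q3 (n - 1 - i) := by simp [ww, h1, h2]

lemma diffV (n k a m : ℕ) (hk : k = 3*a + 2*m) (hn : n = 6*a + 2*m + 2)
    (ham : 1 ≤ a + m) (r : ℕ) (hr : r + 1 < n) :
    vv n k r + vv n k (r+1) - (if r + k + 1 < n then vv n k (r+k+1) else 0)
      - (if k ≤ r then vv n k (r-k) else 0) = 0 := by
  by_cases hA : r + 1 ≤ 3*a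
  · -- head, head, tail; no r-k term
    rw [if_pos (by omega), if_neg (by omega)]
    rw [vv_head (by omega), vv_head (by omega), vv_tail (by omega) (by omega)]
    rcases (by omega : r % 3 = 0 ∨ r % 3 = 1 ∨ r % 3 = 2) with h | h | h
    · rw [p3_0 h, p3_1 (by omega), t3_0 (by omega)]; ring
    · rw [p3_1 h, p3_2 (by omega), t3_2 (by omega)]; ring
    · rw [p3_2 h, p3_0 (by omega), t3_1 (by omega)]; ring
  by_cases hr3a : r = 3*a
  · by_cases hm : m = 0
    · -- case C : r = 3a = k, a ≥ 1
      rw [if_pos (by omega), if_pos (by omega)]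
      rw [vv_head (by omega), vv_tail (by omega) (by omega),
        vv_tail (by omega) (by omega), show r - k = 0 from by omega,
        vv_head (by omega)]
      rw [p3_0 (by omega), t3_0 (by omega), t3_0 (by omega), p3_0 (by omega)]
      ring
    · -- case B : r = 3a, m ≥ 1
      rw [if_pos (by omega), if_neg (by omega)]
      rw [vv_head (by omega), vv_mid (by omega) (by omega),
        vv_tail (by omega) (by omega)]
      rw [p3_0 (by omega), t3_0 (by omega)]
      have hodd : ((-1 : ℚ))^(r+1+k) = -1 := Odd.neg_one_pow ⟨3*a+m, by omega⟩
      rw [hodd]; ring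
  by_cases hD : r + 1 ≤ k
  · -- case D : middle, middle
    rw [if_neg (by omega), if_neg (by omega)]
    rw [vv_mid (by omega) (by omega), vv_mid (by omega) (by omega)]
    have : ((-1 : ℚ))^(r+1+k) = -((-1 : ℚ))^(r+k) := by
      rw [show r+1+k = (r+k)+1 from by ring, pow_succ]; ring
    rw [this]; ring
  by_cases hE : r = k
  · -- case E : r = k, m ≥ 1
    rw [if_neg (by omega), if_pos (by omega)]
    rw [vv_mid (by omega) (by omega), vv_tail (by omega) (by omega),
      show r - k = 0 from by omega, vv_head (by omega)]
    rw [t3_0 (by omega), p3_0 (by omega)]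
    have heven : ((-1 : ℚ))^(r+k) = 1 := Even.neg_one_pow ⟨k, by omega⟩
    rw [heven]; ring
  · -- case F : k+1 ≤ r
    rw [if_neg (by omega), if_pos (by omega)]
    rw [vv_tail (by omega) (by omega), vv_tail (by omega) (by omega),
      vv_head (by omega)]
    rcases (by omega : (n - 1 - r) % 3 = 0 ∨ (n - 1 - r) % 3 = 1 ∨ (n - 1 - r) % 3 = 2)
      with h | h | h
    · rw [t3_0 h, t3_2 (by omega), p3_1 (by omega)]; ring
    · rw [t3_1 h, t3_0 (by omega), p3_0 (by omega)]; ring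
    · rw [t3_2 h, t3_1 (by omega), p3_2 (by omega)]; ring

lemma diffW (n k a m : ℕ) (hk : k = 3*a + 2*m) (hn : n = 6*a + 2*m + 2)
    (ham : 1 ≤ a + m) (r : ℕ) (hr : r + 1 < n) :
    ww n k r + ww n k (r+1) - (if r + k + 1 < n then ww n k (r+k+1) else 0)
      - (if k ≤ r then ww n k (r-k) else 0) = 0 := by
  by_cases hA : r + 1 ≤ 3*a
  · rw [if_pos (by omega), if_neg (by omega)]
    rw [ww_head (by omega), ww_head (by omega), ww_tail (by omega) (by omega)]
    rcases (by omega : r % 3 = 0 ∨ r % 3 = 1 ∨ r % 3 = 2) with h | h | h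
    · rw [q3_0 h, q3_1 (by omega), q3_0 (by omega)]; ring
    · rw [q3_1 h, q3_2 (by omega), q3_2 (by omega)]; ring
    · rw [q3_2 h, q3_0 (by omega), q3_1 (by omega)]; ring
  by_cases hr3a : r = 3*a
  · by_cases hm : m = 0
    · rw [if_pos (by omega), if_pos (by omega)]
      rw [ww_head (by omega), ww_tail (by omega) (by omega),
        ww_tail (by omega) (by omega), show r - k = 0 from by omega,
        ww_head (by omega)]
      rw [q3_0 (by omega), q3_0 (by omega), q3_0 (by omega), q3_0 (by omega)]
      ring
    · rw [if_pos (by omega), if_neg (by omega)]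
      rw [ww_head (by omega), ww_mid (by omega) (by omega),
        ww_tail (by omega) (by omega)]
      rw [q3_0 (by omega), q3_0 (by omega)]
      ring
  by_cases hD : r + 1 ≤ k
  · rw [if_neg (by omega), if_neg (by omega)]
    rw [ww_mid (by omega) (by omega), ww_mid (by omega) (by omega)]
    ring
  by_cases hE : r = k
  · rw [if_neg (by omega), if_pos (by omega)]
    rw [ww_mid (by omega) (by omega), ww_tail (by omega) (by omega),
      show r - k = 0 from by omega, ww_head (by omega)]
    rw [q3_0 (by omega), q3_0 (by omega)]
    ring
  · rw [if_neg (by omega), if_pos (by omega)]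
    rw [ww_tail (by omega) (by omega), ww_tail (by omega) (by omega),
      ww_head (by omega)]
    rcases (by omega : (n - 1 - r) % 3 = 0 ∨ (n - 1 - r) % 3 = 1 ∨ (n - 1 - r) % 3 = 2)
      with h | h | h
    · rw [q3_0 h, q3_2 (by omega), q3_1 (by omega)]; ring
    · rw [q3_1 h, q3_0 (by omega), q3_0 (by omega)]; ring
    · rw [q3_2 h, q3_1 (by omega), q3_2 (by omega)]; ring

lemma row0_aux (n k : ℕ) (hkn : k + 1 ≤ n) (y : ℕ → ℚ) :
    ∑ s ∈ Finset.range n, bb k 0 s * y s = ∑ s ∈ Finset.Ico 1 (k+1), y s := by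
  have h1 : ∀ s ∈ Finset.range n, bb k 0 s * y s
      = if s ∈ Finset.Ico 1 (k+1) then y s else 0 := by
    intro s hs
    simp only [Finset.mem_Ico]
    unfold bb
    split_ifs <;> first | ring1 | (exfalso; omega)
  rw [Finset.sum_congr rfl h1, Finset.sum_ite_mem]
  congr 1
  apply Finset.inter_eq_right.mpr
  intro x hx
  rw [Finset.mem_Ico] at hx
  rw [Finset.mem_range]
  omega

lemma rowV0 (n k a m : ℕ) (hk : k = 3*a + 2*m) (hn : n = 6*a + 2*m + 2)
    (ham : 1 ≤ a + m) :
    ∑ s ∈ Finset.range n, bb k 0 s * vv n k s = 0 := by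
  rw [row0_aux n k (by omega)]
  rw [← Finset.sum_Ico_consecutive _ (show 1 ≤ 3*a+1 from by omega)
    (show 3*a+1 ≤ k+1 from by omega)]
  have hcong3 : ∀ s ∈ Finset.Ico 1 (3*a+1), vv n k s = p3 s := by
    intro s hs
    simp only [Finset.mem_Ico] at hs
    exact vv_head (by omega)
  have hcong4 : ∀ s ∈ Finset.Ico (3*a+1) (k+1), vv n k s = ((-1 : ℚ))^(s+k) := by
    intro s hs
    simp only [Finset.mem_Ico] at hs
    exact vv_mid (by omega) (by omega)
  have h3 : ∑ s ∈ Finset.Ico 1 (3*a+1), vv n k s = 0 := by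
    rw [Finset.sum_congr rfl hcong3]
    rw [Finset.sum_Ico_eq_sum_range, show 3*a+1-1 = 3*a from by omega]
    refine sum_per3 (fun i => p3 (1+i)) (fun i => ?_) (by norm_num [p3]) a
    show p3 (1+(i+3)) = p3 (1+i)
    rw [show 1+(i+3) = (1+i)+3 from by ring]
    exact p3_period (1+i)
  have h4 : ∑ s ∈ Finset.Ico (3*a+1) (k+1), vv n k s = 0 := by
    rw [Finset.sum_congr rfl hcong4]
    rw [Finset.sum_Ico_eq_sum_range, show k+1-(3*a+1) = 2*m from by omega]
    have hcong5 : ∀ i ∈ Finset.range (2*m),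
        ((-1 : ℚ))^(3*a+1+i+k) = ((-1 : ℚ))^((3*a+1+k)+i) := by
      intro i _
      rw [show 3*a+1+i+k = (3*a+1+k)+i from by ring]
    rw [Finset.sum_congr rfl hcong5]
    exact sum_alt (3*a+1+k) m
  rw [h3, h4]; ring

lemma rowW0 (n k a m : ℕ) (hk : k = 3*a + 2*m) (hn : n = 6*a + 2*m + 2)
    (ham : 1 ≤ a + m) :
    ∑ s ∈ Finset.range n, bb k 0 s * ww n k s = 0 := by
  rw [row0_aux n k (by omega)]
  rw [← Finset.sum_Ico_consecutive _ (show 1 ≤ 3*a+1 from by omega)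
    (show 3*a+1 ≤ k+1 from by omega)]
  have hcong3 : ∀ s ∈ Finset.Ico 1 (3*a+1), ww n k s = q3 s := by
    intro s hs
    simp only [Finset.mem_Ico] at hs
    exact ww_head (by omega)
  have hcong4 : ∀ s ∈ Finset.Ico (3*a+1) (k+1), ww n k s = 0 := by
    intro s hs
    simp only [Finset.mem_Ico] at hs
    exact ww_mid (by omega) (by omega)
  have h3 : ∑ s ∈ Finset.Ico 1 (3*a+1), ww n k s = 0 := by
    rw [Finset.sum_congr rfl hcong3]
    rw [Finset.sum_Ico_eq_sum_range, show 3*a+1-1 = 3*a from by omega]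
    refine sum_per3 (fun i => q3 (1+i)) (fun i => ?_) (by norm_num [q3]) a
    show q3 (1+(i+3)) = q3 (1+i)
    rw [show 1+(i+3) = (1+i)+3 from by ring]
    exact q3_period (1+i)
  have h4 : ∑ s ∈ Finset.Ico (3*a+1) (k+1), ww n k s = 0 := by
    rw [Finset.sum_congr rfl hcong4]
    exact Finset.sum_const_zero
  rw [h3, h4]; ring

lemma rowV (n k a m : ℕ) (hk : k = 3*a + 2*m) (hn : n = 6*a + 2*m + 2)
    (ham : 1 ≤ a + m) :
    ∀ r, r < n → ∑ s ∈ Finset.range n, bb k r s * vv n k s = 0 := by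
  intro r
  induction r with
  | zero => intro _; exact rowV0 n k a m hk hn ham
  | succ b ih =>
    intro hb
    have h1 := row_diff n k (by omega) (vv n k) b (by omega)
    have h2 := diffV n k a m hk hn ham b (by omega)
    rw [ih (by omega)] at h1
    linarith

lemma rowW (n k a m : ℕ) (hk : k = 3*a + 2*m) (hn : n = 6*a + 2*m + 2)
    (ham : 1 ≤ a + m) :
    ∀ r, r < n → ∑ s ∈ Finset.range n, bb k r s * ww n k s = 0 := by
  intro r
  induction r with
  | zero => intro _; exact rowW0 n k a m hk hn ham
  | succ b ih =>
    intro hb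
    have h1 := row_diff n k (by omega) (ww n k) b (by omega)
    have h2 := diffW n k a m hk hn ham b (by omega)
    rw [ih (by omega)] at h1
    linarith

lemma uniq (n k a m : ℕ) (hk : k = 3*a + 2*m) (hn : n = 6*a + 2*m + 2)
    (ham : 1 ≤ a + m) (y : ℕ → ℚ)
    (hd : ∀ r, r + 1 < n → y r + y (r+1)
      = (if r + k + 1 < n then y (r+k+1) else 0) + (if k ≤ r then y (r-k) else 0))
    (h0 : y 0 = 0) (hlast : y (n-1) = 0) : ∀ i, i < n → y i = 0 := by
  -- head recurrence
  have hH : ∀ i, i ≤ 3*a → y (i+k+1) = y i + y (i+1) := by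
    intro i hi
    have h := hd i (by omega)
    rw [if_pos (by omega)] at h
    by_cases hki : k ≤ i
    · rw [if_pos hki, show i - k = 0 from by omega, h0] at h
      linarith
    · rw [if_neg hki] at h
      linarith
  -- tail recurrence
  have hT : ∀ i, i ≤ 3*a → y (k+i) + y (k+i+1) = y i := by
    intro i hi
    have h := hd (k+i) (by omega)
    rw [if_pos (show k ≤ k+i from by omega), show k + i - k = i from by omega] at h
    by_cases hc : k + i + k + 1 < n
    · rw [if_pos hc, show k+i+k+1 = n-1 from by omega, hlast] at h
      linarith
    · rw [if_neg hc] at h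
      linarith
  have hstar : ∀ i, i ≤ 3*a → y (k+i) = -y (i+1) := by
    intro i hi
    have h1 := hH i hi
    have h2 := hT i hi
    rw [show k+i+1 = i+k+1 from by ring] at h2
    linarith
  have hrec : ∀ i, i + 1 ≤ 3*a → y (i+2) = -y i - y (i+1) := by
    intro i hi
    have h1 := hH i (by omega)
    have h2 := hstar (i+1) hi
    rw [show k+(i+1) = i+k+1 from by ring] at h2
    linarith
  have hhead : ∀ i, i ≤ 3*a + 1 → y i = y 1 * t3 i := by
    intro i
    induction i using Nat.strong_induction_on with
    | _ i ih =>
      intro hi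
      match i with
      | 0 => rw [h0, t3_0 (by omega)]; ring
      | 1 => rw [t3_1 (by omega)]; ring
      | (j+2) =>
        have e := hrec j (by omega)
        rw [ih j (by omega) (by omega), ih (j+1) (by omega) (by omega)] at e
        rw [e]
        rcases (by omega : j % 3 = 0 ∨ j % 3 = 1 ∨ j % 3 = 2) with h | h | h
        · rw [t3_0 h, t3_1 (by omega), t3_2 (by omega)]; ring
        · rw [t3_1 h, t3_2 (by omega), t3_0 (by omega)]; ring
        · rw [t3_2 h, t3_0 (by omega), t3_1 (by omega)]; ring
  have hc : y 1 = 0 := by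
    have h1 := hH (3*a) (by omega)
    rw [show 3*a+k+1 = n-1 from by omega, hlast] at h1
    rw [hhead (3*a) (by omega), hhead (3*a+1) (by omega),
      t3_0 (by omega), t3_1 (by omega)] at h1
    linarith
  have hheadz : ∀ i, i ≤ 3*a + 1 → y i = 0 := by
    intro i hi
    rw [hhead i hi, hc]; ring
  have hmid : ∀ d, 3*a+1+d ≤ k → y (3*a+1+d) = 0 := by
    intro d
    induction d with
    | zero => intro _; exact hheadz (3*a+1+0) (by omega)
    | succ e ih =>
      intro hd2
      have h := hd (3*a+1+e) (by omega)
      rw [if_neg (by omega), if_neg (by omega)] at h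
      have h2 := ih (by omega)
      rw [show 3*a+1+(e+1) = 3*a+1+e+1 from by ring]
      linarith
  have htail : ∀ i, i ≤ 3*a → y (k+i) = 0 := by
    intro i hi
    rw [hstar i hi, hheadz (i+1) (by omega)]
    ring
  intro i hi
  by_cases h1 : i ≤ 3*a+1
  · exact hheadz i h1
  by_cases h2 : i ≤ k
  · have := hmid (i - (3*a+1)) (by omega)
    rwa [show 3*a+1+(i-(3*a+1)) = i from by omega] at this
  by_cases h3 : i ≤ n-2
  · have := htail (i - k) (by omega)
    rwa [show k+(i-k) = i from by omega] at this
  · rw [show i = n-1 from by omega]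
    exact hlast

lemma ite_sum_Ico (n c : ℕ) (f : ℕ → ℚ) :
    ∑ s ∈ Finset.range n, (if c ≤ s then f s else 0) = ∑ s ∈ Finset.Ico c n, f s := by
  rcases le_or_gt c n with h | h
  · rw [Finset.range_eq_Ico, ← Finset.sum_Ico_consecutive _ (Nat.zero_le c) h]
    have h1 : ∀ s ∈ Finset.Ico 0 c, (if c ≤ s then f s else 0) = 0 := by
      intro s hs; rw [Finset.mem_Ico] at hs; rw [if_neg (by omega)]
    have h2 : ∀ s ∈ Finset.Ico c n, (if c ≤ s then f s else 0) = f s := by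
      intro s hs; rw [Finset.mem_Ico] at hs; rw [if_pos hs.1]
    rw [Finset.sum_congr rfl h1, Finset.sum_congr rfl h2, Finset.sum_const_zero, zero_add]
  · rw [Finset.Ico_eq_empty (by omega)]
    have h1 : ∀ s ∈ Finset.range n, (if c ≤ s then f s else 0) = 0 := by
      intro s hs; rw [Finset.mem_range] at hs; rw [if_neg (by omega)]
    rw [Finset.sum_congr rfl h1, Finset.sum_const_zero, Finset.sum_empty]

lemma tailsum_v (n k a m : ℕ) (hk : k = 3*a + 2*m) (hn : n = 6*a + 2*m + 2)
    (r : ℕ) (hr : r ≤ 3*a) :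
    ∑ s ∈ Finset.Ico (r+k+1) n, vv n k s
      = if (3*a+1-r) % 3 = 2 then 1 else 0 := by
  have hcong : ∀ s ∈ Finset.Ico (r+k+1) n, vv n k s = t3 (n-1-s) := by
    intro s hs; simp only [Finset.mem_Ico] at hs; exact vv_tail (by omega) (by omega)
  rw [Finset.sum_congr rfl hcong, Finset.sum_Ico_eq_sum_range,
    show n - (r+k+1) = 3*a+1-r from by omega]
  have hcong2 : ∀ i ∈ Finset.range (3*a+1-r), t3 (n-1-(r+k+1+i)) = t3 (3*a+1-r-1-i) := by
    intro i _; congr 1; omega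
  rw [Finset.sum_congr rfl hcong2, Finset.sum_range_reflect, sum_t3]

lemma tailsum_w (n k a m : ℕ) (hk : k = 3*a + 2*m) (hn : n = 6*a + 2*m + 2)
    (r : ℕ) (hr : r ≤ 3*a) :
    ∑ s ∈ Finset.Ico (r+k+1) n, ww n k s
      = if (3*a+1-r) % 3 = 0 then 0 else 1 := by
  have hcong : ∀ s ∈ Finset.Ico (r+k+1) n, ww n k s = q3 (n-1-s) := by
    intro s hs; simp only [Finset.mem_Ico] at hs; exact ww_tail (by omega) (by omega)
  rw [Finset.sum_congr rfl hcong, Finset.sum_Ico_eq_sum_range,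
    show n - (r+k+1) = 3*a+1-r from by omega]
  have hcong2 : ∀ i ∈ Finset.range (3*a+1-r), q3 (n-1-(r+k+1+i)) = q3 (3*a+1-r-1-i) := by
    intro i _; congr 1; omega
  rw [Finset.sum_congr rfl hcong2, Finset.sum_range_reflect, sum_q3]

lemma sum_phi : ∀ b : ℕ, ∑ r ∈ Finset.range (3*b+1), (if r % 3 = 1 then (0:ℚ) else -1)
    = -(2*(b:ℚ)+1) := by
  intro b
  induction b with
  | zero =>
    rw [show 3*0+1 = 1 from rfl, Finset.sum_range_one, if_neg (by omega : ¬ (0 % 3 = 1))]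
    norm_num
  | succ c ih =>
    rw [show 3*(c+1)+1 = (3*c+1)+1+1+1 from by ring, Finset.sum_range_succ,
      Finset.sum_range_succ, Finset.sum_range_succ, ih]
    rw [if_pos (by omega : (3*c+1) % 3 = 1),
      if_neg (by omega : ¬ ((3*c+1+1) % 3 = 1)),
      if_neg (by omega : ¬ ((3*c+1+1+1) % 3 = 1))]
    push_cast; ring

lemma vEw (n k a m : ℕ) (hk : k = 3*a + 2*m) (hn : n = 6*a + 2*m + 2)
    (ham : 1 ≤ a + m) :
    ∑ r ∈ Finset.range n, vv n k r * (∑ s ∈ Finset.range n, ee k r s * ww n k s)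
      = -(2*(a:ℚ)+1) := by
  have hinner : ∀ r ∈ Finset.range n,
      vv n k r * (∑ s ∈ Finset.range n, ee k r s * ww n k s)
      = -(vv n k r * ∑ s ∈ Finset.Ico (r+k+1) n, ww n k s)
        + ∑ s ∈ Finset.range n, (if s+k+1 ≤ r then vv n k r * ww n k s else 0) := by
    intro r _
    have h1 : ∀ s ∈ Finset.range n, ee k r s * ww n k s
        = (if r+k+1 ≤ s then -(ww n k s) else 0)
          + (if s+k+1 ≤ r then ww n k s else 0) := by
      intro s _
      unfold ee
      split_ifs <;> first | ring1 | (exfalso; omega)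
    rw [Finset.sum_congr rfl h1, Finset.sum_add_distrib, mul_add]
    congr 1
    · rw [ite_sum_Ico n (r+k+1) (fun s => -(ww n k s))]
      rw [Finset.sum_neg_distrib]
      ring
    · rw [Finset.mul_sum]
      exact Finset.sum_congr rfl fun s _ => by split_ifs <;> ring
  rw [Finset.sum_congr rfl hinner, Finset.sum_add_distrib]
  have hswap : ∑ r ∈ Finset.range n, ∑ s ∈ Finset.range n,
        (if s+k+1 ≤ r then vv n k r * ww n k s else 0)
      = ∑ r ∈ Finset.range n, (ww n k r * ∑ s ∈ Finset.Ico (r+k+1) n, vv n k s) := by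
    rw [Finset.sum_comm]
    refine Finset.sum_congr rfl fun s _ => ?_
    rw [ite_sum_Ico n (s+k+1) (fun r => vv n k r * ww n k s), Finset.mul_sum]
    exact Finset.sum_congr rfl fun r _ => mul_comm _ _
  rw [hswap, ← Finset.sum_add_distrib]
  rw [Finset.range_eq_Ico, ← Finset.sum_Ico_consecutive _
    (show 0 ≤ 3*a+1 from by omega) (show 3*a+1 ≤ n from by omega)]
  have hupper : ∀ r ∈ Finset.Ico (3*a+1) n,
      -(vv n k r * ∑ s ∈ Finset.Ico (r+k+1) n, ww n k s)
        + (ww n k r * ∑ s ∈ Finset.Ico (r+k+1) n, vv n k s) = 0 := by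
    intro r hr
    rw [Finset.mem_Ico] at hr
    rw [Finset.Ico_eq_empty (by omega : ¬ (r+k+1 < n)), Finset.sum_empty]
    ring
  rw [Finset.sum_congr rfl hupper, Finset.sum_const_zero, add_zero]
  have hlower : ∀ r ∈ Finset.Ico 0 (3*a+1),
      -(vv n k r * ∑ s ∈ Finset.Ico (r+k+1) n, ww n k s)
        + (ww n k r * ∑ s ∈ Finset.Ico (r+k+1) n, vv n k s)
      = (if r % 3 = 1 then (0:ℚ) else -1) := by
    intro r hr
    rw [Finset.mem_Ico] at hr
    rw [tailsum_v n k a m hk hn r (by omega), tailsum_w n k a m hk hn r (by omega),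
      vv_head (by omega), ww_head (by omega)]
    rcases (by omega : r % 3 = 0 ∨ r % 3 = 1 ∨ r % 3 = 2) with h | h | h
    · rw [p3_0 h, q3_0 h, if_neg (by omega : ¬ ((3*a+1-r) % 3 = 2)),
        if_neg (by omega : ¬ ((3*a+1-r) % 3 = 0)), if_neg (by omega)]
      ring
    · rw [p3_1 h, q3_1 h, if_neg (by omega : ¬ ((3*a+1-r) % 3 = 2)),
        if_pos (by omega : (3*a+1-r) % 3 = 0), if_pos (by omega)]
      ring
    · rw [p3_2 h, q3_2 h, if_pos (by omega : (3*a+1-r) % 3 = 2),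
        if_neg (by omega : ¬ ((3*a+1-r) % 3 = 0)), if_neg (by omega)]
      ring
  rw [Finset.sum_congr rfl hlower, ← Finset.range_eq_Ico]
  exact sum_phi a

lemma BM_skew (n k : ℕ) : (BM n k)ᵀ = -(BM n k) := by
  funext r s
  simp only [Matrix.transpose_apply, Matrix.neg_apply, BM, Matrix.of_apply]
  unfold bb
  split_ifs <;> first | ring1 | (exfalso; omega)

lemma EM_skew (n k : ℕ) : (EM n k)ᵀ = -(EM n k) := by
  funext r s
  simp only [Matrix.transpose_apply, Matrix.neg_apply, EM, Matrix.of_apply]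
  unfold ee
  split_ifs <;> first | ring1 | (exfalso; omega)

lemma mulVec_vv (n k a m : ℕ) (hk : k = 3*a + 2*m) (hn : n = 6*a + 2*m + 2)
    (ham : 1 ≤ a + m) :
    BM n k *ᵥ (fun i : Fin n => vv n k i) = 0 := by
  funext r
  have h1 : (BM n k *ᵥ (fun i : Fin n => vv n k i)) r
      = ∑ s ∈ Finset.range n, bb k r s * vv n k s := by
    simp only [Matrix.mulVec, dotProduct, BM, Matrix.of_apply]
    exact Fin.sum_univ_eq_sum_range (fun s => bb k (r:ℕ) s * vv n k s) n
  rw [h1, rowV n k a m hk hn ham r r.isLt]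
  rfl

lemma mulVec_ww (n k a m : ℕ) (hk : k = 3*a + 2*m) (hn : n = 6*a + 2*m + 2)
    (ham : 1 ≤ a + m) :
    BM n k *ᵥ (fun i : Fin n => ww n k i) = 0 := by
  funext r
  have h1 : (BM n k *ᵥ (fun i : Fin n => ww n k i)) r
      = ∑ s ∈ Finset.range n, bb k r s * ww n k s := by
    simp only [Matrix.mulVec, dotProduct, BM, Matrix.of_apply]
    exact Fin.sum_univ_eq_sum_range (fun s => bb k (r:ℕ) s * ww n k s) n
  rw [h1, rowW n k a m hk hn ham r r.isLt]
  rfl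

lemma dot_vEw (n k a m : ℕ) (hk : k = 3*a + 2*m) (hn : n = 6*a + 2*m + 2)
    (ham : 1 ≤ a + m) :
    (fun i : Fin n => vv n k i) ⬝ᵥ (EM n k *ᵥ (fun i : Fin n => ww n k i))
      = -(2*(a:ℚ)+1) := by
  have h1 : ∀ r : Fin n, (EM n k *ᵥ (fun i : Fin n => ww n k i)) r
      = ∑ s ∈ Finset.range n, ee k r s * ww n k s := by
    intro r
    simp only [Matrix.mulVec, dotProduct, EM, Matrix.of_apply]
    exact Fin.sum_univ_eq_sum_range (fun s => ee k (r:ℕ) s * ww n k s) n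
  have h2 : (fun i : Fin n => vv n k i) ⬝ᵥ (EM n k *ᵥ (fun i : Fin n => ww n k i))
      = ∑ r ∈ Finset.range n,
          vv n k r * (∑ s ∈ Finset.range n, ee k r s * ww n k s) := by
    simp only [dotProduct]
    rw [Finset.sum_congr rfl (fun r _ => by rw [h1 r])]
    exact Fin.sum_univ_eq_sum_range
      (fun r => vv n k r * (∑ s ∈ Finset.range n, ee k r s * ww n k s)) n
  rw [h2]
  exact vEw n k a m hk hn ham

lemma uniqFin (n k a m : ℕ) (hk : k = 3*a + 2*m) (hn : n = 6*a + 2*m + 2)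
    (ham : 1 ≤ a + m) (h0n : 0 < n) (h1n : n - 1 < n) :
    ∀ y : Fin n → ℚ, BM n k *ᵥ y = 0 → y ⟨0, h0n⟩ = 0 → y ⟨n-1, h1n⟩ = 0 → y = 0 := by
  intro y hBy hy0 hy1
  set Y : ℕ → ℚ := fun i => if h : i < n then y ⟨i, h⟩ else 0 with hY
  have hrows : ∀ r, r < n → ∑ s ∈ Finset.range n, bb k r s * Y s = 0 := by
    intro r hr
    have h1 : ∑ s ∈ Finset.range n, bb k r s * Y s
        = ∑ s : Fin n, bb k r (s:ℕ) * Y (s:ℕ) :=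
      (Fin.sum_univ_eq_sum_range (fun s => bb k r s * Y s) n).symm
    rw [h1]
    have h2 : ∀ s : Fin n, bb k r (s:ℕ) * Y (s:ℕ) = BM n k ⟨r, hr⟩ s * y s := by
      intro s
      simp only [hY, BM, Matrix.of_apply]
      rw [dif_pos s.isLt]
    rw [Finset.sum_congr rfl (fun s _ => h2 s)]
    have h3 : ∑ s : Fin n, BM n k ⟨r,hr⟩ s * y s = (BM n k *ᵥ y) ⟨r, hr⟩ := rfl
    rw [h3, hBy]
    rfl
  have hdiff : ∀ r, r + 1 < n → Y r + Y (r+1)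
      = (if r + k + 1 < n then Y (r+k+1) else 0) + (if k ≤ r then Y (r-k) else 0) := by
    intro r hr
    have h1 := row_diff n k (by omega) Y r hr
    rw [hrows r (by omega), hrows (r+1) hr] at h1
    linarith [h1]
  have hY0 : Y 0 = 0 := by
    rw [hY]; simp only [dif_pos h0n]; exact hy0
  have hYl : Y (n-1) = 0 := by
    rw [hY]; simp only [dif_pos h1n]; exact hy1
  have hall := uniq n k a m hk hn ham Y hdiff hY0 hYl
  funext c
  have h4 := hall (c:ℕ) c.isLt
  rw [hY] at h4
  simpa [c.isLt] using h4

end S19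

open S19 in
set_option maxHeartbeats 1000000 in
theorem stmt_19 (ν k : ℕ) (hν : 2 ≤ ν) (hk1 : ν - 1 ≤ k) (hk2 : k ≤ 2 * ν - 1)
    (hcong : k % 3 = (2 * ν + 1) % 3) :
    (D (2 * ν) k).coeff 0 = 0 ∧ (D (2 * ν) k).coeff 1 = 0 ∧
    (D (2 * ν) k).coeff 2 ≠ 0 := by
  classical
  obtain ⟨a, m, hk, hn, ham⟩ : ∃ a m : ℕ, k = 3*a+2*m ∧ 2*ν = 6*a+2*m+2 ∧ 1 ≤ a+m := by
    refine ⟨(2*ν - k - 2)/3, (k - ((2*ν - k - 2)/3)*3)/2, ?_, ?_, ?_⟩ <;> omega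
  have hApoly : D (2*ν) k
      = ((BM (2*ν) k).map C + (X:ℚ[X]) • (EM (2*ν) k).map C).det := by
    rw [D, Apoly_eq]
  have h0n : 0 < 2*ν := by omega
  have h1n : 2*ν - 1 < 2*ν := by omega
  have hne : (⟨0, h0n⟩ : Fin (2*ν)) ≠ ⟨2*ν-1, h1n⟩ := by
    intro h
    have h2 : (0:ℕ) = 2*ν-1 := congrArg Fin.val h
    omega
  have hvEw0 : (fun i : Fin (2*ν) => vv (2*ν) k i)
      ⬝ᵥ (EM (2*ν) k *ᵥ (fun i : Fin (2*ν) => ww (2*ν) k i)) ≠ 0 := by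
    rw [dot_vEw (2*ν) k a m hk hn ham]
    have hpos : (0:ℚ) < 2*(a:ℚ)+1 := by positivity
    intro hzero
    linarith
  have hv0 : vv (2*ν) k ((⟨0, h0n⟩ : Fin (2*ν)) : ℕ) = 1 := by
    show vv (2*ν) k 0 = 1
    rw [vv_head (by omega), p3_0 (by omega)]
  have hv1 : vv (2*ν) k ((⟨2*ν-1, h1n⟩ : Fin (2*ν)) : ℕ) = 0 := by
    show vv (2*ν) k (2*ν-1) = 0
    rw [vv_tail (by omega) (by omega), t3_0 (by omega)]
  have hw0 : ww (2*ν) k ((⟨0, h0n⟩ : Fin (2*ν)) : ℕ) = 1 := by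
    show ww (2*ν) k 0 = 1
    rw [ww_head (by omega), q3_0 (by omega)]
  have hw1 : ww (2*ν) k ((⟨2*ν-1, h1n⟩ : Fin (2*ν)) : ℕ) = 1 := by
    show ww (2*ν) k (2*ν-1) = 1
    rw [ww_tail (by omega) (by omega), q3_0 (by omega)]
  rw [hApoly]
  exact key (BM (2*ν) k) (EM (2*ν) k)
    (fun i : Fin (2*ν) => vv (2*ν) k i) (fun i : Fin (2*ν) => ww (2*ν) k i)
    ⟨0, h0n⟩ ⟨2*ν-1, h1n⟩ hne (BM_skew (2*ν) k) (EM_skew (2*ν) k)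
    (mulVec_vv (2*ν) k a m hk hn ham) (mulVec_ww (2*ν) k a m hk hn ham)
    hvEw0 hv0 hv1 hw0 hw1
    (uniqFin (2*ν) k a m hk hn ham h0n h1n)
end
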